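/- arXiv:0810.0438 — 13 statements merged into one kernel-verified Lean document; each statement's English description precedes it below -/
import Mathlib

section
/- For all nonnegative integers m and n, the sum over k from 0 to m of binomial(m,k) times B_{n+k} equals (-1)^{m+n} times the sum over k from 0 to n of binomial(n,k) times B_{m+k}, where B_j denotes the j-th Bernoulli number. -/
/-!
Writing `S a m n = ∑ₖ C(m,k) aₙ₊ₖ`, Pascal's rule gives `S a (m+1) n = S a m n + S a m (n+1)`.
This recurrence propagates the symmetry `S a m n = (-1)^(m+n) S a n m` by induction on `m`,
starting from `S a 0 n = aₙ`, as soon as `S a n 0 = (-1)ⁿ aₙ` for all `n`.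
For the Bernoulli numbers the latter is `Bₙ(1) = (-1)ⁿ Bₙ` for the Bernoulli polynomials.
-/

open Finset

section BinomialShiftSum

variable {R : Type*} [CommRing R]

def binomialShiftSum (a : ℕ → R) (m n : ℕ) : R :=
  ∑ k ∈ range (m + 1), (m.choose k : R) * a (n + k)

theorem binomialShiftSum_zero_left (a : ℕ → R) (n : ℕ) : binomialShiftSum a 0 n = a n := by
  simp [binomialShiftSum]

theorem binomialShiftSum_succ_left (a : ℕ → R) (m n : ℕ) :
    binomialShiftSum a (m + 1) n = binomialShiftSum a m n + binomialShiftSum a m (n + 1) := by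
  simpa [binomialShiftSum, add_assoc, add_comm 1] using
    sum_choose_succ_mul (fun i _ => a (n + i)) m

theorem binomialShiftSum_symm (a : ℕ → R)
    (ha : ∀ n, binomialShiftSum a n 0 = (-1) ^ n * a n) (m n : ℕ) :
    binomialShiftSum a m n = (-1) ^ (m + n) * binomialShiftSum a n m := by
  induction m generalizing n with
  | zero =>
    rw [binomialShiftSum_zero_left, ha, zero_add, ← mul_assoc, ← pow_add, Even.neg_one_pow ⟨n, rfl⟩,
      one_mul]
  | succ m ih =>
    rw [binomialShiftSum_succ_left, ih, ih, binomialShiftSum_succ_left a n]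
    ring

end BinomialShiftSum

theorem binomialShiftSum_bernoulli_zero_right (n : ℕ) :
    binomialShiftSum bernoulli n 0 = (-1) ^ n * bernoulli n := by
  rw [← bernoulli'_eq_bernoulli, ← Polynomial.bernoulli_eval_one, Polynomial.bernoulli,
    Polynomial.eval_finsetSum, binomialShiftSum]
  simp [mul_comm]

theorem gessel_bernoulli (m n : ℕ) :
    ∑ k ∈ range (m + 1), (m.choose k : ℚ) * bernoulli (n + k) =
    (-1 : ℚ) ^ (m + n) * ∑ k ∈ range (n + 1), (n.choose k : ℚ) * bernoulli (m + k) :=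
  binomialShiftSum_symm bernoulli binomialShiftSum_bernoulli_zero_right m n
end

section
/- (Momiyama's identity) For all integers m, n >= 0 with m + n > 0, (-1)^m * sum_{k=0}^{m} binomial(m+1, k) * (n+k+1) * B_{n+k} = -(-1)^n * sum_{k=0}^{n} binomial(n+1, k) * (m+k+1) * B_{m+k}. -/
open Finset

/-- Umbral evaluation of `x^a (x+1)^b` at the Bernoulli umbra. -/
def momiyamaU (a b : ℕ) : ℚ := ∑ j ∈ range (b + 1), (b.choose j : ℚ) * bernoulli (a + j)

lemma momiyamaU_zero (a : ℕ) : momiyamaU a 0 = bernoulli a := by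
  simp [momiyamaU]

lemma momiyamaU_succ (a b : ℕ) :
    momiyamaU a (b + 1) = momiyamaU a b + momiyamaU (a + 1) b := by
  have h1 : momiyamaU a (b + 1)
      = ∑ j ∈ range (b + 1), ((b + 1).choose (j + 1) : ℚ) * bernoulli (a + (j + 1))
        + ((b + 1).choose 0 : ℚ) * bernoulli (a + 0) := by
    rw [momiyamaU, Finset.sum_range_succ']
  have h2 : ∑ j ∈ range (b + 1), (b.choose (j + 1) : ℚ) * bernoulli (a + (j + 1))
      = momiyamaU a b - bernoulli a := by
    have h3 : (∑ j ∈ range (b + 2), (b.choose j : ℚ) * bernoulli (a + j))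
        = ∑ j ∈ range (b + 1), (b.choose (j + 1) : ℚ) * bernoulli (a + (j + 1))
          + (b.choose 0 : ℚ) * bernoulli (a + 0) := Finset.sum_range_succ' _ _
    have h4 : (∑ j ∈ range (b + 2), (b.choose j : ℚ) * bernoulli (a + j))
        = momiyamaU a b + (b.choose (b + 1) : ℚ) * bernoulli (a + (b + 1)) :=
      Finset.sum_range_succ _ _
    rw [h3] at h4
    simp only [Nat.choose_succ_self, Nat.cast_zero, zero_mul, add_zero, Nat.choose_zero_right,
      Nat.cast_one, one_mul, Nat.add_zero] at h4
    linarith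
  rw [h1]
  have hc : ∀ j ∈ range (b + 1), ((b + 1).choose (j + 1) : ℚ) * bernoulli (a + (j + 1))
      = (b.choose j : ℚ) * bernoulli (a + 1 + j) + (b.choose (j + 1) : ℚ) * bernoulli (a + (j + 1)) := by
    intro j _
    rw [Nat.choose_succ_succ]
    push_cast
    have : a + 1 + j = a + (j + 1) := by omega
    rw [this]
    ring
  rw [Finset.sum_congr rfl hc, Finset.sum_add_distrib, h2]
  have hU : (∑ j ∈ range (b + 1), (b.choose j : ℚ) * bernoulli (a + 1 + j))
      = momiyamaU (a + 1) b := rfl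
  rw [hU]
  simp only [Nat.choose_zero_right, Nat.cast_one, one_mul, Nat.add_zero]
  ring

lemma momiyamaU_zero_left (b : ℕ) : momiyamaU 0 b = (-1 : ℚ) ^ b * bernoulli b := by
  have h1 : momiyamaU 0 b = (∑ j ∈ range b, (b.choose j : ℚ) * bernoulli j) + bernoulli b := by
    rw [momiyamaU, Finset.sum_range_succ]
    simp
  rw [h1, sum_bernoulli]
  rcases eq_or_ne b 1 with rfl | hb
  · norm_num
  · simp only [hb, if_false, zero_add]
    rcases Nat.even_or_odd b with he | ho
    · rw [he.neg_one_pow, one_mul]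
    · rcases Nat.lt_or_ge b 2 with h2 | h2
      · interval_cases b <;> simp_all
      · rw [bernoulli_eq_bernoulli'_of_ne_one hb, bernoulli'_eq_zero_of_odd ho (by omega)]
        ring

lemma momiyamaU_symm (a b : ℕ) :
    momiyamaU a b = (-1 : ℚ) ^ (a + b) * momiyamaU b a := by
  induction b generalizing a with
  | zero =>
    rw [momiyamaU_zero, momiyamaU_zero_left, Nat.add_zero, ← mul_assoc, ← pow_add]
    rw [Even.neg_one_pow ⟨a, rfl⟩, one_mul]
  | succ b ih =>
    rw [momiyamaU_succ, ih a, ih (a + 1), momiyamaU_succ b a]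
    rw [pow_add, pow_add, pow_add, pow_add]
    ring

lemma momiyama_full (m n : ℕ) :
    ∑ k ∈ range (m + 2), ((m + 1).choose k : ℚ) * (n + k + 1) * bernoulli (n + k)
      = (n + 1) * momiyamaU n (m + 1) + (m + 1) * momiyamaU (n + 1) m := by
  have h1 : ∀ k ∈ range (m + 2), ((m + 1).choose k : ℚ) * (n + k + 1) * bernoulli (n + k)
      = (n + 1) * (((m + 1).choose k : ℚ) * bernoulli (n + k))
        + (k : ℚ) * ((m + 1).choose k : ℚ) * bernoulli (n + k) := by
    intro k _; ring
  have hA : (∑ k ∈ range (m + 2), ((m + 1).choose k : ℚ) * bernoulli (n + k))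
      = momiyamaU n (m + 1) := rfl
  have hB : (∑ k ∈ range (m + 2), (k : ℚ) * ((m + 1).choose k : ℚ) * bernoulli (n + k))
      = (m + 1) * momiyamaU (n + 1) m := by
    rw [Finset.sum_range_succ']
    simp only [Nat.cast_zero, zero_mul, add_zero]
    have h2 : ∀ k ∈ range (m + 1), ((k + 1 : ℕ) : ℚ) * ((m + 1).choose (k + 1) : ℚ)
          * bernoulli (n + (k + 1))
        = (m + 1) * ((m.choose k : ℚ) * bernoulli (n + 1 + k)) := by
      intro k _
      have h3 : (m + 1) * m.choose k = (m + 1).choose (k + 1) * (k + 1) := Nat.add_one_mul_choose_eq m k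
      have h4 : ((m : ℚ) + 1) * (m.choose k : ℚ) = ((m + 1).choose (k + 1) : ℚ) * ((k : ℚ) + 1) := by
        exact_mod_cast congrArg (Nat.cast (R := ℚ)) h3
      have h5 : n + (k + 1) = n + 1 + k := by omega
      rw [h5]
      push_cast
      linear_combination (-(bernoulli (n + 1 + k))) * h4
    rw [Finset.sum_congr rfl h2, ← Finset.mul_sum]
    rfl
  rw [Finset.sum_congr rfl h1, Finset.sum_add_distrib, ← Finset.mul_sum, hA, hB]

theorem momiyama (m n : ℕ) (h : 0 < m + n) :
    (-1 : ℚ) ^ m * ∑ k ∈ range (m + 1),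
        ((m + 1).choose k : ℚ) * (n + k + 1) * bernoulli (n + k) =
    -((-1 : ℚ) ^ n * ∑ k ∈ range (n + 1),
        ((n + 1).choose k : ℚ) * (m + k + 1) * bernoulli (m + k)) := by
  have e1 : ∑ k ∈ range (m + 1), ((m + 1).choose k : ℚ) * (n + k + 1) * bernoulli (n + k)
      = (n + 1) * momiyamaU n (m + 1) + (m + 1) * momiyamaU (n + 1) m
        - ((m : ℚ) + n + 2) * bernoulli (n + (m + 1)) := by
    have := momiyama_full m n
    rw [Finset.sum_range_succ] at this
    simp only [Nat.choose_self, Nat.cast_one, one_mul] at this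
    push_cast at this ⊢
    linarith
  have e2 : ∑ k ∈ range (n + 1), ((n + 1).choose k : ℚ) * (m + k + 1) * bernoulli (m + k)
      = (m + 1) * momiyamaU m (n + 1) + (n + 1) * momiyamaU (m + 1) n
        - ((m : ℚ) + n + 2) * bernoulli (m + (n + 1)) := by
    have := momiyama_full n m
    rw [Finset.sum_range_succ] at this
    simp only [Nat.choose_self, Nat.cast_one, one_mul] at this
    push_cast at this ⊢
    linarith
  have hidx : n + (m + 1) = m + (n + 1) := by omega
  rw [e1, e2, hidx]
  rw [momiyamaU_symm n (m + 1), momiyamaU_symm (n + 1) m]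
  have hB : ((-1 : ℚ) ^ m + (-1 : ℚ) ^ n) * bernoulli (m + (n + 1)) = 0 := by
    rcases Nat.even_or_odd (m + n) with he | ho
    · have hodd : Odd (m + (n + 1)) := by
        rcases he with ⟨c, hc⟩; exact ⟨c, by omega⟩
      rw [bernoulli_eq_bernoulli'_of_ne_one (by omega),
        bernoulli'_eq_zero_of_odd hodd (by omega), mul_zero]
    · have : (-1 : ℚ) ^ m = -(-1 : ℚ) ^ n := by
        rcases Nat.even_or_odd m with hm | hm
        · have hn : Odd n := by
            rcases ho with ⟨c, hc⟩; rcases hm with ⟨d, hd⟩; exact ⟨c - d, by omega⟩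
          rw [hm.neg_one_pow, hn.neg_one_pow]; ring
        · have hn : Even n := by
            rcases ho with ⟨c, hc⟩; rcases hm with ⟨d, hd⟩; exact ⟨c - d, by omega⟩
          rw [hm.neg_one_pow, hn.neg_one_pow]
      rw [this]; ring
  have hp1 : (-1 : ℚ) ^ (n + (m + 1)) = -((-1 : ℚ) ^ n * (-1 : ℚ) ^ m) := by
    rw [pow_add, pow_succ]; ring
  have hp2 : (-1 : ℚ) ^ (n + 1 + m) = -((-1 : ℚ) ^ n * (-1 : ℚ) ^ m) := by
    rw [pow_add, pow_add]; ring
  rw [hp1, hp2]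
  have hmm : (-1 : ℚ) ^ m * (-1 : ℚ) ^ m = 1 := by
    rw [← pow_add]; exact Even.neg_one_pow ⟨m, rfl⟩
  linear_combination (-((-1 : ℚ) ^ n) * (((n : ℚ) + 1) * momiyamaU (m + 1) n
      + ((m : ℚ) + 1) * momiyamaU m (n + 1))) * hmm
    + (-((m : ℚ) + (n : ℚ) + 2)) * hB
end

section
/- (Kaneko's identity) For every integer n >= 1, sum_{k=0}^{n+1} binomial(n+1, k) * (n+k+1) * B_{n+k} = 0. -/
open Finset

private def kanekoS (m n : ℕ) : ℚ :=
  ∑ j ∈ range (m + 1), (m.choose j : ℚ) * bernoulli (n + j)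

private lemma kanekoS_rec (m n : ℕ) :
    kanekoS (m + 1) n = kanekoS m n + kanekoS m (n + 1) := by
  unfold kanekoS
  rw [sum_range_succ' (fun j => ((m + 1).choose j : ℚ) * bernoulli (n + j))]
  simp only [Nat.choose_succ_succ, Nat.cast_add, add_mul]
  rw [sum_add_distrib]
  have h1 : ∑ i ∈ range (m + 1), (m.choose (i + 1) : ℚ) * bernoulli (n + (i + 1))
      = ∑ i ∈ range m, (m.choose (i + 1) : ℚ) * bernoulli (n + (i + 1)) := by
    rw [sum_range_succ, Nat.choose_succ_self, Nat.cast_zero, zero_mul, add_zero]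
  have h2 : ∑ j ∈ range (m + 1), (m.choose j : ℚ) * bernoulli (n + j)
      = (∑ i ∈ range m, (m.choose (i + 1) : ℚ) * bernoulli (n + (i + 1)))
        + (m.choose 0 : ℚ) * bernoulli (n + 0) := sum_range_succ' _ _
  have h3 : ∑ j ∈ range (m + 1), (m.choose j : ℚ) * bernoulli (n + 1 + j)
      = ∑ i ∈ range (m + 1), (m.choose i : ℚ) * bernoulli (n + (i + 1)) := by
    refine sum_congr rfl fun i _ => by ring_nf
  rw [h1, h2, h3]
  simp only [Nat.choose_zero_right, Nat.cast_one, one_mul, Nat.add_zero, add_zero]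
  ring

private lemma kanekoS_base (n : ℕ) : kanekoS n 0 = (-1 : ℚ) ^ n * bernoulli n := by
  unfold kanekoS
  simp only [zero_add]
  rw [sum_range_succ, sum_bernoulli, Nat.choose_self, Nat.cast_one, one_mul]
  rcases eq_or_ne n 1 with rfl | hn
  · norm_num
  · rw [if_neg hn, zero_add]
    conv_lhs => rw [bernoulli_eq_bernoulli'_of_ne_one hn, bernoulli'_eq_bernoulli]

private lemma kanekoS_symm (m : ℕ) : ∀ n : ℕ,
    (-1 : ℚ) ^ m * kanekoS m n = (-1 : ℚ) ^ n * kanekoS n m := by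
  induction m with
  | zero =>
    intro n
    have h0 : kanekoS 0 n = bernoulli n := by
      unfold kanekoS; simp
    rw [h0, kanekoS_base, pow_zero, one_mul, ← mul_assoc, ← mul_pow]
    norm_num
  | succ m ih =>
    intro n
    have e1 : kanekoS (m + 1) n = kanekoS m n + kanekoS m (n + 1) := kanekoS_rec m n
    have e2 : kanekoS (n + 1) m = kanekoS n m + kanekoS n (m + 1) := kanekoS_rec n m
    have i1 := ih n
    have i2 := ih (n + 1)
    have hs : ((-1 : ℚ)) ^ (m + 1) = -((-1 : ℚ) ^ m) := by ring
    have hs2 : ((-1 : ℚ)) ^ (n + 1) = -((-1 : ℚ) ^ n) := by ring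
    rw [e2, hs2] at i2
    rw [e1, hs]
    linear_combination -i1 - i2

theorem kaneko (n : ℕ) (h : 1 ≤ n) :
    ∑ k ∈ range (n + 2), ((n + 1).choose k : ℚ) * (n + k + 1) * bernoulli (n + k) = 0 := by
  have split : ∑ k ∈ range (n + 2), ((n + 1).choose k : ℚ) * (n + k + 1) * bernoulli (n + k)
      = (n + 1 : ℚ) * kanekoS (n + 1) n
        + ∑ k ∈ range (n + 2), ((n + 1).choose k : ℚ) * k * bernoulli (n + k) := by
    unfold kanekoS
    rw [mul_sum, ← sum_add_distrib]
    refine sum_congr rfl fun k _ => by push_cast; ring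
  have shift : ∑ k ∈ range (n + 2), ((n + 1).choose k : ℚ) * k * bernoulli (n + k)
      = (n + 1 : ℚ) * kanekoS n (n + 1) := by
    rw [sum_range_succ' (fun k => ((n + 1).choose k : ℚ) * k * bernoulli (n + k))]
    simp only [Nat.cast_zero, mul_zero, zero_mul, add_zero]
    unfold kanekoS
    rw [mul_sum]
    refine sum_congr rfl fun i _ => ?_
    have hc : ((n + 1).choose (i + 1) : ℚ) * (i + 1) = (n + 1) * (n.choose i : ℚ) := by
      have := Nat.add_one_mul_choose_eq n i
      have : ((n + 1) * n.choose i : ℕ) = ((n + 1).choose (i + 1) * (i + 1) : ℕ) := this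
      exact_mod_cast (congrArg (fun x : ℕ => (x : ℚ)) this).symm
    rw [show n + (i + 1) = n + 1 + i from by omega]
    push_cast
    linear_combination bernoulli (n + 1 + i) * hc
  have symm := kanekoS_symm (n + 1) n
  have hkey : kanekoS (n + 1) n + kanekoS n (n + 1) = 0 := by
    have hs : ((-1 : ℚ)) ^ (n + 1) = -((-1 : ℚ) ^ n) := by ring
    rw [hs] at symm
    have hne : ((-1 : ℚ)) ^ n ≠ 0 := pow_ne_zero _ (by norm_num)
    have h2 : (-1 : ℚ) ^ n * (kanekoS (n + 1) n + kanekoS n (n + 1)) = 0 := by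
      rw [mul_add]; linarith [symm]
    exact (mul_eq_zero.mp h2).resolve_left hne
  rw [split, shift, ← mul_add, hkey, mul_zero]
end

section
/- (Gessel–Viennot identity) For nonnegative integers n < k, sum_{j=0}^{floor((k-1)/2)} (1/(k-j)) * binomial(2k-2j, k+1) * binomial(2n+1, 2j+1) * B_{2n-2j} = ((2n+1)/(2k-2n+1)) * binomial(2k-2n+1, k+1). -/
/-!
Let `C = 1 + x C²` be the Catalan series. The coefficient of `x ^ k` in `x ^ a C ^ (a + 1)` is the
ballot number `(a + 1) / (2k - a + 1) * binom(2k - a + 1, k + 1)`, so with the weights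
`w_j = B_{2n-2j} binom(2n+1, 2j+1) / (j + 1)` the identity is the coefficient of `x ^ k`,
`k > n`, in `∑ w_j x^(2j+1) C^(2j+2) = x^(2n) C^(2n+1) + (a polynomial of degree ≤ n)`.

The substitution `X ↦ x C²` sends `1 + X` to `C`, hence `X^i (1+X)^m` to `x^i C^(2i+m)`. It sends
`Ψ = ∑ w_j X^(2j+1) (1+X)^(2n-2j) - X^(2n) (1+X)` to `C^(2n)` times the difference of the two
series above, and every palindromic polynomial of degree `2n`, a combination of the
`X^i (1+X)^(2n-2i)`, to `C^(2n)` times a polynomial of degree `≤ n`. So it suffices that `Ψ` is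
palindromic, and this is the reflection `B_m(1 - x) = B_m(x)` for even `m`, which gives
`∑ w_j (X^(2j+2) - 1) (1+X)^(2n-2j) = (1+X) (X^(2n+1) - 1)`.
-/

open Finset

namespace GesselViennot

section Catalan

open PowerSeries

noncomputable def ratCatalanSeries : ℚ⟦X⟧ := map (Nat.castRingHom ℚ) catalanSeries

theorem ratCatalanSeries_eq_one_add_X_mul_sq :
    ratCatalanSeries = 1 + X * ratCatalanSeries ^ 2 := by
  have h := congrArg (map (Nat.castRingHom ℚ)) catalanSeries_sq_mul_X_add_one
  simp only [map_add, map_mul, map_pow, map_X, map_one] at h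
  rw [ratCatalanSeries]
  linear_combination -h

theorem constantCoeff_ratCatalanSeries : constantCoeff ratCatalanSeries = 1 := by
  rw [← coeff_zero_eq_constantCoeff_apply, ratCatalanSeries, coeff_map]
  simp

theorem ratCatalanSeries_ne_zero : ratCatalanSeries ≠ 0 := fun h => by
  simpa [h] using constantCoeff_ratCatalanSeries

theorem ratCatalanSeries_pow_succ (a : ℕ) :
    ratCatalanSeries ^ (a + 1) = ratCatalanSeries ^ a + X * ratCatalanSeries ^ (a + 2) := by
  linear_combination ratCatalanSeries ^ a * ratCatalanSeries_eq_one_add_X_mul_sq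

def ballotNumber (s a : ℕ) : ℚ := (a + 1) / (2 * s + a + 1) * (2 * s + a + 1).choose s

theorem ballotNumber_zero_left (a : ℕ) : ballotNumber 0 a = 1 := by
  have : (a + 1 : ℚ) ≠ 0 := by positivity
  simp [ballotNumber, this]

theorem ballotNumber_succ_zero (s : ℕ) : ballotNumber (s + 1) 0 = ballotNumber s 1 := by
  have h : ((2 * s + 3 : ℕ) * (2 * s + 2).choose s : ℚ) =
      (2 * s + 3).choose (s + 1) * (s + 1) := by
    exact_mod_cast Nat.add_one_mul_choose_eq (2 * s + 2) s
  simp only [ballotNumber]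
  rw [show 2 * (s + 1) + 0 + 1 = 2 * s + 3 by ring, show 2 * s + 1 + 1 = 2 * s + 2 by ring]
  push_cast at h ⊢
  field_simp
  linear_combination -2 * h

theorem ballotNumber_succ_succ (s a : ℕ) :
    ballotNumber (s + 1) (a + 1) = ballotNumber (s + 1) a + ballotNumber s (a + 2) := by
  have pascal : (2 * s + a + 4).choose (s + 1) =
      (2 * s + a + 3).choose s + (2 * s + a + 3).choose (s + 1) :=
    Nat.choose_succ_succ _ s
  have h := Nat.choose_succ_right_eq (2 * s + a + 3) s
  rw [show 2 * s + a + 3 - s = s + a + 3 by omega] at h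
  have hq : ((2 * s + a + 3).choose (s + 1) * (s + 1) : ℚ)
      = (2 * s + a + 3).choose s * (s + a + 3) := by exact_mod_cast h
  simp only [ballotNumber]
  rw [show 2 * (s + 1) + (a + 1) + 1 = 2 * s + a + 4 by ring,
    show 2 * (s + 1) + a + 1 = 2 * s + a + 3 by ring,
    show 2 * s + (a + 2) + 1 = 2 * s + a + 3 by ring, pascal]
  push_cast
  field_simp
  linear_combination (2 * (2 * s + a + 3 : ℚ)) * hq

theorem coeff_ratCatalanSeries_pow (s a : ℕ) :
    coeff s (ratCatalanSeries ^ (a + 1)) = ballotNumber s a := by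
  induction s generalizing a with
  | zero => simp [constantCoeff_ratCatalanSeries, ballotNumber_zero_left]
  | succ s ih =>
    induction a with
    | zero =>
      rw [ratCatalanSeries_pow_succ, map_add, coeff_succ_X_mul, pow_zero, coeff_one,
        if_neg s.succ_ne_zero, zero_add, ih, ballotNumber_succ_zero]
    | succ a iha =>
      rw [ratCatalanSeries_pow_succ, map_add, coeff_succ_X_mul, iha, ih, ballotNumber_succ_succ]

theorem coeff_X_pow_mul_ratCatalanSeries_pow {a k : ℕ} (h : a ≤ 2 * k) :
    coeff k (X ^ a * ratCatalanSeries ^ (a + 1)) =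
      (a + 1) / (2 * k - a + 1 : ℚ) * (2 * k - a + 1).choose (k + 1) := by
  rw [coeff_X_pow_mul']
  split_ifs with hak
  · obtain ⟨s, rfl⟩ := Nat.exists_eq_add_of_le hak
    rw [Nat.add_sub_cancel_left, coeff_ratCatalanSeries_pow, ballotNumber,
      show 2 * (a + s) - a + 1 = 2 * s + a + 1 by omega,
      Nat.choose_symm_of_eq_add (show 2 * s + a + 1 = s + (a + s + 1) by ring)]
    push_cast
    ring
  · rw [Nat.choose_eq_zero_of_lt (by omega)]
    simp

end Catalan

theorem sum_range_bernoulli_mul_eq_bernoulli_one_add (N : ℕ) (f : ℕ → ℚ) :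
    ∑ i ∈ range (2 * N + 3), bernoulli i * f i =
      bernoulli 1 * f 1 + ∑ j ∈ range (N + 2), bernoulli (2 * j) * f (2 * j) := by
  induction N with
  | zero => simp only [sum_range_succ, sum_range_zero]; ring
  | succ N ih =>
    rw [show 2 * (N + 1) + 3 = 2 * N + 3 + 1 + 1 by ring, sum_range_succ, sum_range_succ, ih,
      sum_range_succ _ (N + 2),
      bernoulli_eq_zero_of_odd (n := 2 * N + 3) ⟨N + 1, by ring⟩ (by omega),
      show 2 * N + 3 + 1 = 2 * (N + 2) by ring]
    ring

theorem sum_bernoulli_mul_choose_mul_pow_eq_bernoulli_eval {a : ℚ} (ha : a ≠ 0) (m : ℕ)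
    (y : ℚ) :
    ∑ i ∈ range (m + 1), bernoulli i * (m.choose i * y ^ (m - i) * a ^ i) =
      a ^ m * (Polynomial.bernoulli m).eval (y / a) := by
  rw [Polynomial.bernoulli, Polynomial.eval_finsetSum, mul_sum]
  refine sum_congr rfl fun i hi => ?_
  rw [Polynomial.eval_monomial, div_pow, ← pow_sub_mul_pow a (mem_range_succ_iff.mp hi)]
  field_simp

/-- The reflection `B_m(1 - x) = B_m(x)`, `m` even, in homogeneous form with `x = q / (1 + q)`. -/
theorem sum_bernoulli_mul_choose_mul_pow_sub_one_eq_zero {m : ℕ} (hm : Even m) (q : ℚ) :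
    ∑ i ∈ range (m + 1), bernoulli i * (m.choose i * (q ^ (m - i) - 1) * (1 + q) ^ i) = 0 := by
  by_cases hq : 1 + q = 0
  · rw [sum_range_succ', show q = -1 by linarith [hq]]
    simp [hm.neg_one_pow]
  have hreflect : 1 / (1 + q) = 1 - q / (1 + q) := by field_simp; ring
  calc
    _ = ∑ i ∈ range (m + 1), bernoulli i * (m.choose i * q ^ (m - i) * (1 + q) ^ i) -
          ∑ i ∈ range (m + 1), bernoulli i * (m.choose i * 1 ^ (m - i) * (1 + q) ^ i) := by
      rw [← sum_sub_distrib]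
      exact sum_congr rfl fun i _ => by ring
    _ = 0 := by
      rw [sum_bernoulli_mul_choose_mul_pow_eq_bernoulli_eval hq,
        sum_bernoulli_mul_choose_mul_pow_eq_bernoulli_eval hq, hreflect,
        Polynomial.bernoulli_eval_one_sub, hm.neg_one_pow, one_mul, sub_self]

noncomputable def weight (n j : ℕ) : ℚ :=
  bernoulli (2 * n - 2 * j) * (2 * n + 1).choose (2 * j + 1) / (j + 1)

theorem succ_mul_weight {n j : ℕ} (hj : j ≤ n) :
    (n + 1) * weight n j = bernoulli (2 * n - 2 * j) * (2 * n + 2).choose (2 * n - 2 * j) := by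
  have h : ((2 * n + 1 + 1 : ℕ) * (2 * n + 1).choose (2 * j + 1) : ℚ) =
      (2 * n + 2).choose (2 * j + 2) * (2 * j + 1 + 1 : ℕ) := by
    exact_mod_cast Nat.add_one_mul_choose_eq (2 * n + 1) (2 * j + 1)
  rw [Nat.choose_symm_of_eq_add (show 2 * n + 2 = (2 * n - 2 * j) + (2 * j + 2) by omega), weight]
  push_cast at h
  field_simp
  linear_combination bernoulli (2 * n - 2 * j) * h / 2

theorem sum_weight_mul_pow_sub_one_mul_one_add_pow (n : ℕ) (q : ℚ) :
    ∑ j ∈ range (n + 1), weight n j * ((q ^ (2 * j + 2) - 1) * (1 + q) ^ (2 * n - 2 * j)) =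
      (1 + q) * (q ^ (2 * n + 1) - 1) := by
  have h := sum_bernoulli_mul_choose_mul_pow_sub_one_eq_zero (m := 2 * n + 2) ⟨n + 1, by ring⟩ q
  rw [sum_range_bernoulli_mul_eq_bernoulli_one_add n
      (fun i => (2 * n + 2).choose i * (q ^ (2 * n + 2 - i) - 1) * (1 + q) ^ i),
    sum_range_succ, ← sum_range_reflect] at h
  have reindex : ∀ j ∈ range (n + 1),
      bernoulli (2 * (n + 1 - 1 - j)) * ((2 * n + 2).choose (2 * (n + 1 - 1 - j)) *
        (q ^ (2 * n + 2 - 2 * (n + 1 - 1 - j)) - 1) * (1 + q) ^ (2 * (n + 1 - 1 - j))) =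
      (n + 1) * (weight n j * ((q ^ (2 * j + 2) - 1) * (1 + q) ^ (2 * n - 2 * j))) := by
    intro j hj
    have hjn := mem_range_succ_iff.mp hj
    rw [show 2 * (n + 1 - 1 - j) = 2 * n - 2 * j by omega,
      show 2 * n + 2 - (2 * n - 2 * j) = 2 * j + 2 by omega]
    linear_combination (-((q ^ (2 * j + 2) - 1) * (1 + q) ^ (2 * n - 2 * j))) *
      succ_mul_weight hjn
  rw [sum_congr rfl reindex, ← mul_sum, show 2 * n + 2 - 2 * (n + 1) = 0 by omega, pow_zero,
    sub_self, bernoulli_one, Nat.choose_one_right] at h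
  apply mul_left_cancel₀ (show (n + 1 : ℚ) ≠ 0 by positivity)
  push_cast at h
  linear_combination h

section Palindromic

open Polynomial

variable {R : Type*} [CommRing R]

def IsPalindromic (d : ℕ) (ψ : R[X]) : Prop :=
  ψ.natDegree ≤ d ∧ ∀ i ≤ d, ψ.coeff i = ψ.coeff (d - i)

/-- The difference vanishes at both ends, so it is `X` times a palindrome of degree `d`. -/
theorem IsPalindromic.divX_sub {d : ℕ} {ψ : R[X]} (h : IsPalindromic (d + 2) ψ) :
    IsPalindromic d (ψ - C (ψ.coeff 0) * (1 + X) ^ (d + 2)).divX := by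
  obtain ⟨hdeg, hsymm⟩ := h
  rw [natDegree_le_iff_coeff_eq_zero] at hdeg
  set r := ψ - C (ψ.coeff 0) * (1 + X) ^ (d + 2)
  have coeff_r (t : ℕ) : r.coeff t = ψ.coeff t - ψ.coeff 0 * (d + 2).choose t := by
    rw [coeff_sub, coeff_C_mul, coeff_one_add_X_pow]
  have hrsymm : ∀ i ≤ d + 2, r.coeff i = r.coeff (d + 2 - i) := fun i hi => by
    rw [coeff_r, coeff_r, hsymm i hi, Nat.choose_symm hi]
  refine ⟨natDegree_le_iff_coeff_eq_zero.mpr fun t ht => ?_, fun i hi => ?_⟩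
  · rw [coeff_divX]
    rcases (show t + 1 = d + 2 ∨ d + 2 < t + 1 by omega) with ht | ht
    · rw [ht, hrsymm _ le_rfl, Nat.sub_self, coeff_r]
      simp
    · rw [coeff_r, hdeg _ ht, Nat.choose_eq_zero_of_lt ht, Nat.cast_zero, mul_zero, sub_zero]
  · rw [coeff_divX, coeff_divX, hrsymm _ (by omega), show d + 2 - (i + 1) = d - i + 1 by omega]

theorem IsPalindromic.exists_eq_sum {N : ℕ} {ψ : R[X]} (h : IsPalindromic (2 * N) ψ) :
    ∃ a : ℕ → R,
      ψ = ∑ i ∈ range (N + 1), C (a i) * X ^ i * (1 + X) ^ (2 * N - 2 * i) := by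
  induction N generalizing ψ with
  | zero => exact ⟨fun _ => ψ.coeff 0, by simpa using eq_C_of_natDegree_le_zero h.1⟩
  | succ N ih =>
    set r := ψ - C (ψ.coeff 0) * (1 + X) ^ (2 * N + 2) with hr
    obtain ⟨b, hb⟩ := ih (show IsPalindromic (2 * N + 2) ψ from h).divX_sub
    have hψ : ψ = C (ψ.coeff 0) * (1 + X) ^ (2 * N + 2) + X * r.divX := by
      have hr0 : r.coeff 0 = 0 := by simp [hr, coeff_one_add_X_pow]
      rw [← add_zero (X * r.divX), ← C_0, ← hr0, X_mul_divX_add, hr, add_sub_cancel]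
    refine ⟨fun i => if i = 0 then ψ.coeff 0 else b (i - 1), ?_⟩
    conv_lhs => rw [hψ, hb, mul_sum]
    conv_rhs => rw [sum_range_succ', add_comm]
    congr 1
    · simp [mul_add]
    · refine sum_congr rfl fun i _ => ?_
      simp only [Nat.add_one_ne_zero, if_false, Nat.add_sub_cancel]
      rw [show 2 * (N + 1) - 2 * (i + 1) = 2 * N - 2 * i by omega]
      ring

theorem aeval_mul_sq_X_pow_mul_one_add_X_pow {S : Type*} [CommSemiring S] [Algebra R S] {x c : S}
    (hc : c = 1 + x * c ^ 2) (i m : ℕ) :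
    aeval (x * c ^ 2) (X ^ i * (1 + X) ^ m : R[X]) = x ^ i * c ^ (2 * i + m) := by
  rw [map_mul, map_pow, map_pow, map_add, map_one, aeval_X, ← hc, mul_pow, ← pow_mul, mul_assoc,
    ← pow_add, mul_comm 2 i]

end Palindromic

section WeightPolynomials

open Polynomial

noncomputable def weightPoly (n : ℕ) : ℚ[X] :=
  ∑ j ∈ range (n + 1), C (weight n j) * (1 + X) ^ (2 * n - 2 * j)

noncomputable def reflectedWeightPoly (n : ℕ) : ℚ[X] :=
  ∑ j ∈ range (n + 1), C (weight n j) * X ^ (2 * j + 1) * (1 + X) ^ (2 * n - 2 * j)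

noncomputable def palindromicPoly (n : ℕ) : ℚ[X] :=
  reflectedWeightPoly n - X ^ (2 * n) * (1 + X)

theorem X_mul_palindromicPoly (n : ℕ) : X * palindromicPoly n = weightPoly n - 1 - X := by
  have h : ∑ j ∈ range (n + 1),
      C (weight n j) * ((X ^ (2 * j + 2) - 1) * (1 + X) ^ (2 * n - 2 * j)) =
        (1 + X) * (X ^ (2 * n + 1) - 1) :=
    funext fun q => by simpa [eval_finsetSum] using sum_weight_mul_pow_sub_one_mul_one_add_pow n q
  have hsub : X * reflectedWeightPoly n - weightPoly n = ∑ j ∈ range (n + 1),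
      C (weight n j) * ((X ^ (2 * j + 2) - 1) * (1 + X) ^ (2 * n - 2 * j)) := by
    rw [reflectedWeightPoly, weightPoly, mul_sum, ← sum_sub_distrib]
    exact sum_congr rfl fun j _ => by ring
  rw [palindromicPoly]
  linear_combination hsub.trans h

theorem coeff_weightPoly (n s : ℕ) :
    (weightPoly n).coeff s = ∑ j ∈ range (n + 1), weight n j * (2 * n - 2 * j).choose s := by
  simp only [weightPoly, finsetSum_coeff, coeff_C_mul, coeff_one_add_X_pow]

theorem coeff_reflectedWeightPoly {n i : ℕ} (hi : i ≤ 2 * n + 1) :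
    (reflectedWeightPoly n).coeff i = (weightPoly n).coeff (2 * n + 1 - i) := by
  rw [reflectedWeightPoly, finsetSum_coeff, coeff_weightPoly]
  refine sum_congr rfl fun j hj => ?_
  have hjn := mem_range_succ_iff.mp hj
  rw [mul_assoc, mul_comm (X ^ _), ← mul_assoc, coeff_mul_X_pow', coeff_C_mul]
  split_ifs with hji
  · rw [coeff_one_add_X_pow,
      Nat.choose_symm_of_eq_add (show 2 * n - 2 * j = (i - (2 * j + 1)) + (2 * n + 1 - i) by omega)]
  · rw [Nat.choose_eq_zero_of_lt (by omega), Nat.cast_zero, mul_zero]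

theorem coeff_palindromicPoly (n t : ℕ) :
    (palindromicPoly n).coeff t = (weightPoly n).coeff (t + 1) - if t = 0 then 1 else 0 := by
  rw [← coeff_X_mul, X_mul_palindromicPoly, coeff_sub, coeff_sub, coeff_one, coeff_X]
  rcases t with _ | t <;> simp

theorem isPalindromic_palindromicPoly (n : ℕ) : IsPalindromic (2 * n) (palindromicPoly n) := by
  refine ⟨natDegree_le_iff_coeff_eq_zero.mpr fun t ht => ?_, fun i hi => ?_⟩
  · rw [coeff_palindromicPoly, coeff_weightPoly, if_neg (by omega), sub_zero]
    exact sum_eq_zero fun j _ => by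
      rw [Nat.choose_eq_zero_of_lt (by omega), Nat.cast_zero, mul_zero]
  · rw [coeff_palindromicPoly, palindromicPoly, coeff_sub, coeff_reflectedWeightPoly (by omega),
      coeff_X_pow_mul', show 2 * n + 1 - (2 * n - i) = i + 1 by omega]
    rcases i with _ | i
    · simp
    · rw [if_neg (by omega), if_neg (by omega)]

end WeightPolynomials

section Series

open PowerSeries

theorem aeval_palindromicPoly (n : ℕ) :
    Polynomial.aeval (X * ratCatalanSeries ^ 2) (palindromicPoly n) =
      ratCatalanSeries ^ (2 * n) *
        (∑ j ∈ range (n + 1),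
            C (weight n j) * (X ^ (2 * j + 1) * ratCatalanSeries ^ (2 * j + 2)) -
          X ^ (2 * n) * ratCatalanSeries ^ (2 * n + 1)) := by
  have h := aeval_mul_sq_X_pow_mul_one_add_X_pow (R := ℚ) ratCatalanSeries_eq_one_add_X_mul_sq
  rw [palindromicPoly, reflectedWeightPoly, map_sub, map_sum, mul_sub, mul_sum]
  congr 1
  · refine sum_congr rfl fun j hj => ?_
    rw [mul_assoc, map_mul, h, Polynomial.aeval_C, PowerSeries.algebraMap_apply,
      Algebra.algebraMap_self_apply, show 2 * (2 * j + 1) + (2 * n - 2 * j) = 2 * n + (2 * j + 2) by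
        have := mem_range_succ_iff.mp hj; omega, pow_add]
    ring
  · rw [← pow_one (1 + Polynomial.X), h, show 2 * (2 * n) + 1 = 2 * n + (2 * n + 1) by ring,
      pow_add]
    ring

theorem exists_aeval_palindromicPoly_eq (n : ℕ) : ∃ a : ℕ → ℚ,
    Polynomial.aeval (X * ratCatalanSeries ^ 2) (palindromicPoly n) =
      ratCatalanSeries ^ (2 * n) * ∑ i ∈ range (n + 1), C (a i) * X ^ i := by
  obtain ⟨a, ha⟩ := (isPalindromic_palindromicPoly n).exists_eq_sum
  refine ⟨a, ?_⟩
  rw [ha, map_sum, mul_sum]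
  refine sum_congr rfl fun i hi => ?_
  rw [mul_assoc, map_mul,
    aeval_mul_sq_X_pow_mul_one_add_X_pow ratCatalanSeries_eq_one_add_X_mul_sq, Polynomial.aeval_C,
    PowerSeries.algebraMap_apply, Algebra.algebraMap_self_apply,
    show 2 * i + (2 * n - 2 * i) = 2 * n by have := mem_range_succ_iff.mp hi; omega]
  ring

theorem exists_sum_weight_mul_X_pow_mul_ratCatalanSeries_pow_eq (n : ℕ) : ∃ a : ℕ → ℚ,
    ∑ j ∈ range (n + 1), C (weight n j) * (X ^ (2 * j + 1) * ratCatalanSeries ^ (2 * j + 2)) =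
      X ^ (2 * n) * ratCatalanSeries ^ (2 * n + 1) + ∑ i ∈ range (n + 1), C (a i) * X ^ i := by
  obtain ⟨a, ha⟩ := exists_aeval_palindromicPoly_eq n
  rw [aeval_palindromicPoly] at ha
  exact ⟨a, by
    linear_combination mul_left_cancel₀ (pow_ne_zero _ ratCatalanSeries_ne_zero) ha⟩

theorem sum_weight_mul_coeff_X_pow_mul_ratCatalanSeries_pow {n k : ℕ} (h : n < k) :
    ∑ j ∈ range (n + 1),
        weight n j * coeff k (X ^ (2 * j + 1) * ratCatalanSeries ^ (2 * j + 2)) =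
      coeff k (X ^ (2 * n) * ratCatalanSeries ^ (2 * n + 1)) := by
  obtain ⟨a, ha⟩ := exists_sum_weight_mul_X_pow_mul_ratCatalanSeries_pow_eq n
  have hk := congrArg (coeff k) ha
  simp only [map_sum, map_add, coeff_C_mul, coeff_X_pow, mul_ite, mul_one, mul_zero,
    sum_ite_eq] at hk
  rwa [if_neg (by simpa using h.not_ge), add_zero] at hk

theorem weight_mul_coeff_X_pow_mul_ratCatalanSeries_pow {n j k : ℕ} (hj : j < k) :
    weight n j * coeff k (X ^ (2 * j + 1) * ratCatalanSeries ^ (2 * j + 2)) =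
      1 / (k - j : ℚ) * (2 * k - 2 * j).choose (k + 1) * (2 * n + 1).choose (2 * j + 1) *
        bernoulli (2 * n - 2 * j) := by
  have hkj : (k - j : ℚ) ≠ 0 := sub_ne_zero.mpr (by exact_mod_cast hj.ne')
  rw [coeff_X_pow_mul_ratCatalanSeries_pow (by omega),
    show 2 * k - (2 * j + 1) + 1 = 2 * k - 2 * j by omega, weight]
  push_cast
  rw [show (2 * k - (2 * j + 1) + 1 : ℚ) = 2 * (k - j) by ring]
  field_simp
  ring

end Series

end GesselViennot

theorem gessel_viennot (n k : ℕ) (h : n < k) :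
    ∑ j ∈ range ((k - 1) / 2 + 1),
        (1 / ((k : ℚ) - j)) * ((2 * k - 2 * j).choose (k + 1) : ℚ) *
          ((2 * n + 1).choose (2 * j + 1) : ℚ) * bernoulli (2 * n - 2 * j) =
    ((2 * n + 1 : ℚ) / (2 * k - 2 * n + 1 : ℚ)) * ((2 * k - 2 * n + 1).choose (k + 1) : ℚ) := by
  open GesselViennot PowerSeries in
  calc
    _ = ∑ j ∈ range k, 1 / ((k : ℚ) - j) * ((2 * k - 2 * j).choose (k + 1) : ℚ) *
          ((2 * n + 1).choose (2 * j + 1) : ℚ) * bernoulli (2 * n - 2 * j) := by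
      refine sum_subset (range_subset_range.mpr (by omega)) fun j _ hj => ?_
      rw [mem_range, not_lt] at hj
      rw [Nat.choose_eq_zero_of_lt (by omega : 2 * k - 2 * j < k + 1)]
      simp
    _ = ∑ j ∈ range k,
          weight n j * coeff k (X ^ (2 * j + 1) * ratCatalanSeries ^ (2 * j + 2)) :=
      sum_congr rfl fun j hj =>
        (weight_mul_coeff_X_pow_mul_ratCatalanSeries_pow (mem_range.mp hj)).symm
    _ = ∑ j ∈ range (n + 1),
          weight n j * coeff k (X ^ (2 * j + 1) * ratCatalanSeries ^ (2 * j + 2)) := by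
      refine (sum_subset (range_subset_range.mpr h) fun j _ hj => ?_).symm
      rw [mem_range, not_lt] at hj
      rw [weight, Nat.choose_eq_zero_of_lt (by omega : 2 * n + 1 < 2 * j + 1)]
      simp
    _ = _ := by
      rw [sum_weight_mul_coeff_X_pow_mul_ratCatalanSeries_pow h,
        coeff_X_pow_mul_ratCatalanSeries_pow (by omega)]
      push_cast
      ring
end

section
/- (Gelfand's identity) For integers m, n >= 0 not both zero, (-1)^{n-1} * sum_{k=1}^{m} binomial(m, k-1) * B_{n+k}/(n+k) + (-1)^{m-1} * sum_{k=1}^{n} binomial(n, k-1) * B_{m+k}/(m+k) = m! * n! / (m+n+1)!. -/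
/-!
Put `G(a, b) = ∑_{j<a} C(a, j) B_{b+j+1}/(b+j+1)`, so that the left side is
`F(m, n) = (-1)^(n+1) G(m, n) + (-1)^(m+1) G(n, m)`. Pascal's rule gives
`G(a+1, b) = G(a, b) + G(a, b+1) + B_{a+b+1}/(a+b+1)`, and in `F` the two extra Bernoulli terms
cancel as soon as `m + n ≥ 1`: `B_{m+n+1}` vanishes when `m + n` is even, and otherwise the signs
agree. Hence `F(m+1, n) = F(m, n) - F(m, n+1)`, the recursion satisfied by the Beta values
`m! n!/(m+n+1)!`. The initial values `F(0, n) = -G(n, 0) = 1/(n+1)` come from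
`∑_{k ≤ n} C(n+1, k) B_k = 0`.
-/

open Finset

theorem sum_Icc_one_eq_sum_range {M : Type*} [AddCommMonoid M] (a : ℕ) (f : ℕ → M) :
    ∑ k ∈ Icc 1 a, f k = ∑ j ∈ range a, f (j + 1) := by
  rw [range_eq_Ico, sum_Ico_add', ← Ico_add_one_right_eq_Icc]

def shiftedBinomialSum {R : Type*} [Semiring R] (f : ℕ → R) (a b : ℕ) : R :=
  ∑ j ∈ range a, (a.choose j : R) * f (b + j)

namespace shiftedBinomialSum

variable {R : Type*} [Semiring R] (f : ℕ → R)

theorem zero_left (b : ℕ) : shiftedBinomialSum f 0 b = 0 := by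
  simp [shiftedBinomialSum]

theorem succ_left (a b : ℕ) :
    shiftedBinomialSum f (a + 1) b =
      shiftedBinomialSum f a b + shiftedBinomialSum f a (b + 1) + f (a + b) := by
  set g : ℕ → R := fun j => (a.choose j : R) * f (b + j)
  have split_top := sum_range_succ g a
  have split_bot := sum_range_succ' g a
  simp only [g, Nat.choose_self, Nat.choose_zero_right, Nat.cast_one, one_mul, add_zero]
    at split_top split_bot
  have shift :
      ∑ j ∈ range a, (a.choose j : R) * f (b + (j + 1)) = shiftedBinomialSum f a (b + 1) :=
    sum_congr rfl fun j _ => by rw [← add_assoc, add_right_comm]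
  rw [shiftedBinomialSum, sum_range_succ']
  simp only [Nat.choose_succ_succ', Nat.cast_add, add_mul, sum_add_distrib, Nat.choose_zero_right,
    Nat.cast_one, one_mul, add_zero]
  rw [shift, add_assoc, ← split_bot, split_top, ← shiftedBinomialSum, add_comm b a]
  abel

end shiftedBinomialSum

theorem neg_one_pow_mul_bernoulli {k : ℕ} (hk : k ≠ 1) : (-1 : ℚ) ^ k * bernoulli k = bernoulli k := by
  rw [← bernoulli'_eq_bernoulli, bernoulli_eq_bernoulli'_of_ne_one hk]

def bernoulliSuccDiv (i : ℕ) : ℚ := bernoulli (i + 1) / (i + 1)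

theorem shiftedBinomialSum_bernoulliSuccDiv_zero_right {n : ℕ} (hn : n ≠ 0) :
    shiftedBinomialSum bernoulliSuccDiv n 0 = -1 / (n + 1) := by
  have term : ∀ j ∈ range n, ((n : ℚ) + 1) * ((n.choose j : ℚ) * bernoulliSuccDiv (0 + j)) =
      ((n + 1).choose (j + 1) : ℚ) * bernoulli (j + 1) := fun j _ => by
    have pascal : ((n : ℚ) + 1) * n.choose j = (n + 1).choose (j + 1) * ((j : ℚ) + 1) := by
      exact_mod_cast Nat.add_one_mul_choose_eq n j
    rw [bernoulliSuccDiv, zero_add]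
    field_simp
    linear_combination bernoulli (j + 1) * pascal
  have vanishing := sum_range_succ' (fun k => ((n + 1).choose k : ℚ) * bernoulli k) n
  rw [sum_bernoulli, if_neg (by omega), Nat.choose_zero_right, Nat.cast_one, one_mul,
    bernoulli_zero] at vanishing
  rw [eq_div_iff (by positivity), mul_comm, shiftedBinomialSum, mul_sum, sum_congr rfl term]
  linarith

def gelfandSum (m n : ℕ) : ℚ :=
  (-1) ^ (n + 1) * shiftedBinomialSum bernoulliSuccDiv m n
    + (-1) ^ (m + 1) * shiftedBinomialSum bernoulliSuccDiv n m

theorem gelfandSum_succ_left {m n : ℕ} (h : m + n ≠ 0) :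
    gelfandSum (m + 1) n = gelfandSum m n - gelfandSum m (n + 1) := by
  have rec_m := shiftedBinomialSum.succ_left bernoulliSuccDiv m n
  have rec_n := shiftedBinomialSum.succ_left bernoulliSuccDiv n m
  have sign : (-1 : ℚ) ^ (n + 1) * bernoulli (m + n + 1) = (-1) ^ m * bernoulli (m + n + 1) := by
    have sign_sq : ((-1 : ℚ) ^ m) ^ 2 = 1 := by rw [← pow_mul, pow_mul', neg_one_sq, one_pow]
    linear_combination (-1 : ℚ) ^ m * neg_one_pow_mul_bernoulli (k := m + n + 1) (by omega)
      - (-1 : ℚ) ^ (n + 1) * bernoulli (m + n + 1) * sign_sq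
  rw [add_comm n m] at rec_n
  simp only [gelfandSum, bernoulliSuccDiv] at *
  push_cast at *
  linear_combination (-1 : ℚ) ^ (n + 1) * rec_m - (-1 : ℚ) ^ m * rec_n + sign / (m + n + 1)

theorem factorial_mul_factorial_div_factorial_succ_left (m n : ℕ) :
    ((m + 1).factorial * n.factorial / (m + 1 + n + 1).factorial : ℚ) =
      m.factorial * n.factorial / (m + n + 1).factorial
        - m.factorial * (n + 1).factorial / (m + (n + 1) + 1).factorial := by
  rw [show m + 1 + n + 1 = m + n + 1 + 1 by omega, show m + (n + 1) + 1 = m + n + 1 + 1 by omega]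
  simp only [Nat.factorial_succ, Nat.cast_mul]
  field_simp
  push_cast
  ring

theorem gelfandSum_eq {m n : ℕ} (h : ¬(m = 0 ∧ n = 0)) :
    gelfandSum m n = m.factorial * n.factorial / (m + n + 1).factorial := by
  induction m generalizing n with
  | zero =>
    rw [gelfandSum, shiftedBinomialSum.zero_left,
      shiftedBinomialSum_bernoulliSuccDiv_zero_right (by omega)]
    simp only [mul_zero, zero_add, Nat.factorial_zero, Nat.factorial_succ]
    push_cast
    field_simp
  | succ m ih =>
    by_cases hmn : m = 0 ∧ n = 0
    · obtain ⟨rfl, rfl⟩ := hmn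
      norm_num [gelfandSum, shiftedBinomialSum, bernoulliSuccDiv]
    · rw [gelfandSum_succ_left (by omega), ih hmn, ih (by omega),
        factorial_mul_factorial_div_factorial_succ_left]

theorem sum_Icc_choose_mul_bernoulli_div (a b : ℕ) :
    ∑ k ∈ Icc 1 a, (a.choose (k - 1) : ℚ) * bernoulli (b + k) / (b + k) =
      shiftedBinomialSum bernoulliSuccDiv a b := by
  rw [sum_Icc_one_eq_sum_range, shiftedBinomialSum]
  refine sum_congr rfl fun j _ => ?_
  rw [bernoulliSuccDiv, Nat.add_sub_cancel, ← add_assoc]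
  push_cast
  ring

theorem gelfand (m n : ℕ) (h : ¬(m = 0 ∧ n = 0)) :
    (-1 : ℚ) ^ (n + 1) * ∑ k ∈ Icc 1 m, (m.choose (k - 1) : ℚ) * bernoulli (n + k) / (n + k)
      + (-1 : ℚ) ^ (m + 1) * ∑ k ∈ Icc 1 n, (n.choose (k - 1) : ℚ) * bernoulli (m + k) / (m + k)
    = (m.factorial : ℚ) * (n.factorial : ℚ) / ((m + n + 1).factorial : ℚ) := by
  rw [sum_Icc_choose_mul_bernoulli_div, sum_Icc_choose_mul_bernoulli_div]
  exact gelfandSum_eq h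
end

section
/- (Woodcock's identity) For positive integers m and n, (1/m) * sum_{k=1}^{m} binomial(m,k) * (-1)^k * B_{m-k} * B_{n-1+k} = (1/n) * sum_{k=1}^{n} binomial(n,k) * (-1)^k * B_{n-k} * B_{m-1+k}. -/
/-!
With `B(t) = t / (e^t - 1) = ∑ Bₙ tⁿ / n!`, clearing the denominators `e^x - 1`, `e^y - 1` and
`e^(y-x) - 1` (using `e^(y-x) e^x = e^y` and `B(-t) = B(t) + t`) proves the two-variable identity
`y B(x) B(y - x) - x B(y) B(x - y) = (y - x) B(x) B(y)`.
Woodcock's identity is its coefficient of `x^m y^n`, multiplied by `(m - 1)! (n - 1)!`.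
The series live in `ℚ⟦y⟧⟦x⟧`, where `f(y - x)` is the Taylor expansion
`f(y + x) = ∑ⱼ xʲ ∂⁽ʲ⁾f(y)` (Hasse derivatives `∂⁽ʲ⁾`) followed by `x ↦ -x`.
-/

open Finset
open scoped Nat

namespace PowerSeries

variable {R : Type*} [CommRing R]

noncomputable def hasseDeriv (j : ℕ) (f : R⟦X⟧) : R⟦X⟧ :=
  mk fun a => (j + a).choose j * coeff (j + a) f

@[simp]
theorem coeff_hasseDeriv (j a : ℕ) (f : R⟦X⟧) :
    coeff a (hasseDeriv j f) = (j + a).choose j * coeff (j + a) f :=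
  coeff_mk _ _

theorem hasseDeriv_mul (j : ℕ) (f g : R⟦X⟧) :
    hasseDeriv j (f * g) = ∑ p ∈ antidiagonal j, hasseDeriv p.1 f * hasseDeriv p.2 g := by
  ext a
  have vandermonde : ∀ r ∈ antidiagonal (j + a),
      ((j + a).choose j : R) * (coeff r.1 f * coeff r.2 g) =
        ∑ p ∈ antidiagonal j,
          (r.1.choose p.1 * coeff r.1 f) * (r.2.choose p.2 * coeff r.2 g) := by
    rintro ⟨r, s⟩ hrs
    rw [HasAntidiagonal.mem_antidiagonal] at hrs
    rw [← hrs, Nat.add_choose_eq, Nat.cast_sum, sum_mul]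
    push_cast
    exact sum_congr rfl fun p _ => by ring
  rw [coeff_hasseDeriv, coeff_mul, mul_sum, sum_congr rfl vandermonde, ← sum_product',
    map_sum]
  simp only [coeff_mul, coeff_hasseDeriv]
  rw [← sum_product']
  symm
  -- `(i, k, p, q) ↦ (i + p, k + q, i, k)` misses only terms with a vanishing binomial coefficient
  refine sum_of_injOn (fun x => ((x.1.1 + x.2.1, x.1.2 + x.2.2), x.1)) ?_ ?_ ?_ fun _ _ => rfl
  · rintro ⟨⟨i, k⟩, ⟨p, q⟩⟩ _ ⟨⟨i', k'⟩, ⟨p', q'⟩⟩ _ h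
    simp only [Prod.mk.injEq] at h ⊢
    omega
  · rintro ⟨⟨i, k⟩, ⟨p, q⟩⟩ h
    simp only [coe_product, Set.mem_prod, mem_coe, HasAntidiagonal.mem_antidiagonal] at h ⊢
    omega
  · rintro ⟨⟨r, s⟩, ⟨i, k⟩⟩ h hne
    simp only [mem_product, HasAntidiagonal.mem_antidiagonal] at h
    rcases lt_or_ge r i with hi | hi
    · simp [Nat.choose_eq_zero_of_lt hi]
    rcases lt_or_ge s k with hk | hk
    · simp [Nat.choose_eq_zero_of_lt hk]
    exact absurd ⟨((i, k), (r - i, s - k)), by simp; omega, by simp; omega⟩ hne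
/-- `taylor f = f(y + x)` in `R⟦y⟧⟦x⟧`, the outer variable being `x`. -/
noncomputable def taylor : R⟦X⟧ →+* R⟦X⟧⟦X⟧ where
  toFun f := mk fun j => hasseDeriv j f
  map_one' := by
    ext j a
    rcases j with _ | j <;> simp [coeff_one]
  map_mul' f g := by
    ext j : 1
    simp [coeff_mul, hasseDeriv_mul]
  map_zero' := by
    ext
    simp
  map_add' f g := by
    ext
    simp [mul_add]

@[simp]
theorem coeff_taylor (j : ℕ) (f : R⟦X⟧) : coeff j (taylor f) = hasseDeriv j f := by
  simp [taylor]

theorem taylor_X : taylor (X : R⟦X⟧) = C X + X := by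
  ext j a
  rcases j with _ | _ | j
  · simp [coeff_X]
  · rcases a with _ | a <;> simp [coeff_one, coeff_X]
  · simp [coeff_X]
    omega

theorem coeff_zero_taylor (f : R⟦X⟧) : coeff 0 (taylor f) = f := by
  ext a
  simp

theorem taylor_exp (A : Type*) [CommRing A] [Algebra ℚ A] :
    taylor (exp A) = C (exp A) * map C (exp A) := by
  ext j a
  simp only [coeff_taylor, coeff_hasseDeriv, coeff_C_mul, coeff_map, coeff_exp]
  rw [mul_comm (exp A), coeff_C_mul, coeff_exp, ← map_natCast (algebraMap ℚ A), ← map_mul,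
    ← map_mul, Nat.cast_add_choose]
  congr 1
  field_simp

theorem taylor_injective : Function.Injective (taylor : R⟦X⟧ → R⟦X⟧⟦X⟧) :=
  Function.LeftInverse.injective coeff_zero_taylor

theorem rescale_C (a r : R) : rescale a (C r) = C r := by
  ext n
  rcases n with _ | n <;> simp [coeff_C]

theorem coeff_coeff_rescale_neg_one_taylor (f : R⟦X⟧) (j a : ℕ) :
    coeff a (coeff j (rescale (-1) (taylor f))) =
      (-1) ^ j * ((j + a).choose j * coeff (j + a) f) := by
  rw [coeff_rescale, coeff_taylor, ← map_one C, ← map_neg, ← map_pow, coeff_C_mul,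
    coeff_hasseDeriv]

theorem coeff_coeff_rescale_neg_one_taylor_rescale_neg_one (f : R⟦X⟧) (j a : ℕ) :
    coeff a (coeff j (rescale (-1) (taylor (rescale (-1) f)))) =
      (-1) ^ a * ((a + j).choose a * coeff (a + j) f) := by
  have hsq : (-1 : R) ^ j * (-1) ^ j = 1 := by rw [← mul_pow, neg_one_mul, neg_neg, one_pow]
  rw [coeff_coeff_rescale_neg_one_taylor, coeff_rescale, add_comm j a,
    ← Nat.choose_symm_add (a := a), pow_add]
  linear_combination ((a + j).choose a * coeff (a + j) f * (-1) ^ a) * hsq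

theorem rescale_neg_one_bernoulliPowerSeries (A : Type*) [CommRing A] [Algebra ℚ A] :
    rescale (-1) (bernoulliPowerSeries A) = bernoulliPowerSeries A + X := by
  ext n
  have key : (-1 : ℚ) ^ n * (bernoulli n / n !) = bernoulli n / n ! + if n = 1 then 1 else 0 := by
    rcases eq_or_ne n 1 with rfl | hn
    · norm_num [bernoulli_one]
    · rw [if_neg hn, add_zero, ← mul_div_assoc]
      conv_lhs => rw [bernoulli, ← mul_assoc, ← mul_pow, neg_one_mul, neg_neg, one_pow, one_mul,
        ← bernoulli_eq_bernoulli'_of_ne_one hn]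
  simpa [bernoulliPowerSeries, coeff_rescale, coeff_X, apply_ite] using
    congrArg (algebraMap ℚ A) key

end PowerSeries

theorem two_variable_identity_of_mul_sub_one {S : Type*} [CommRing S] [NoZeroDivisors S]
    {x y E F G b₁ b₂ b₃ : S} (h₁ : b₁ * (E - 1) = x) (h₂ : b₂ * (F - 1) = y)
    (h₃ : b₃ * (G - 1) = y - x) (hGE : G * E = F) (hE : E ≠ 1) (hF : F ≠ 1) (hG : G ≠ 1) :
    y * b₁ * b₃ - x * b₂ * (b₃ + (y - x)) = (y - x) * b₁ * b₂ := by
  have key : (y * b₁ * b₃ - x * b₂ * (b₃ + (y - x)) - (y - x) * b₁ * b₂) *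
      ((E - 1) * (F - 1) * (G - 1)) = 0 := by
    linear_combination y * (F - 1) * (b₃ * (G - 1) * h₁ + x * h₃)
      - x * (E - 1) * (b₃ * (G - 1) * h₂ + y * h₃) - x * (y - x) * (E - 1) * (G - 1) * h₂
      - (y - x) * (G - 1) * (b₁ * (E - 1) * h₂ + y * h₁) - x * y * (y - x) * hGE
  have hD : (E - 1) * (F - 1) * (G - 1) ≠ 0 := by
    simp [sub_eq_zero, hE, hF, hG]
  exact sub_eq_zero.mp ((mul_eq_zero.mp key).resolve_right hD)

open PowerSeries

/-- With `x = X` and `y = C X`: `y B(x) B(y - x) - x B(y) B(x - y) = (y - x) B(x) B(y)`. -/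
theorem bernoulliPowerSeries_two_variable_identity :
    (C X * map C (bernoulliPowerSeries ℚ) * rescale (-1) (taylor (bernoulliPowerSeries ℚ))
      - X * C (bernoulliPowerSeries ℚ) *
        rescale (-1) (taylor (rescale (-1) (bernoulliPowerSeries ℚ))) : ℚ⟦X⟧⟦X⟧)
      = (C X - X) * map C (bernoulliPowerSeries ℚ) * C (bernoulliPowerSeries ℚ) := by
  have hB := bernoulliPowerSeries_mul_exp_sub_one ℚ
  have hexp : exp ℚ ≠ 1 := fun h => by simpa using congrArg (coeff 1) h
  have hsub : rescale (-1) (taylor X) = (C X - X : ℚ⟦X⟧⟦X⟧) := by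
    rw [taylor_X, map_add, rescale_C, rescale_X, map_neg, map_one, neg_one_mul, sub_eq_add_neg]
  have hneg : rescale (-1) (taylor (rescale (-1) (bernoulliPowerSeries ℚ))) =
      rescale (-1) (taylor (bernoulliPowerSeries ℚ)) + (C X - X) := by
    rw [rescale_neg_one_bernoulliPowerSeries, map_add, map_add, hsub]
  rw [hneg]
  refine two_variable_identity_of_mul_sub_one (E := map C (exp ℚ)) (F := C (exp ℚ))
    (G := rescale (-1) (taylor (exp ℚ))) ?_ ?_ ?_ ?_ ?_ ?_ ?_
  · simpa using congrArg (PowerSeries.map C) hB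
  · simpa using congrArg C hB
  · simpa [hsub] using congrArg (fun f => rescale (-1) (taylor f)) hB
  · have hmap : rescale (-1) (PowerSeries.map C (exp ℚ)) =
        PowerSeries.map C (rescale (-1) (exp ℚ)) := by
      simpa using rescale_map C (-1 : ℚ) (exp ℚ)
    have hinv : rescale (-1) (exp ℚ) * exp ℚ = 1 := by
      rw [mul_comm]
      exact exp_mul_exp_neg_eq_one
    rw [taylor_exp, map_mul, rescale_C, hmap, mul_assoc, ← map_mul, hinv, map_one, mul_one]
  · rw [← map_one (PowerSeries.map C)]
    exact (map_injective C C_injective).ne hexp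
  · rw [← map_one C]
    exact C_injective.ne hexp
  · simpa using (rescale_injective (neg_ne_zero.2 one_ne_zero)).ne (taylor_injective.ne hexp)

theorem sum_antidiagonal_eq_add_sum_Icc {M : Type*} [AddCommMonoid M] (f : ℕ → ℕ → M)
    (m : ℕ) :
    ∑ p ∈ antidiagonal m, f p.1 p.2 = f m 0 + ∑ k ∈ Icc 1 m, f (m - k) k := by
  rw [← Nat.sum_antidiagonal_swap, Nat.sum_antidiagonal_eq_sum_range_succ_mk, range_eq_Ico,
    sum_eq_sum_Ico_succ_bot m.succ_pos, Nat.succ_eq_add_one, Ico_add_one_right_eq_Icc]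
  simp

def woodcockSum (m n : ℕ) : ℚ :=
  ∑ p ∈ antidiagonal m, (m.choose p.2 : ℚ) * (-1) ^ p.2 * bernoulli p.1 * bernoulli (n + p.2)

theorem sum_bernoulli_div_factorial_eq_woodcockSum_div (m n : ℕ) :
    ∑ p ∈ antidiagonal m, bernoulli p.1 / p.1 ! *
      ((-1) ^ p.2 * ((p.2 + n).choose p.2 * (bernoulli (p.2 + n) / (p.2 + n)!))) =
      woodcockSum m n / (m ! * n !) := by
  rw [woodcockSum, sum_div]
  refine sum_congr rfl fun ⟨i, k⟩ h => ?_
  rw [HasAntidiagonal.mem_antidiagonal] at h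
  subst h
  dsimp only
  rw [Nat.cast_add_choose, ← Nat.choose_symm_add, Nat.cast_add_choose, add_comm n k]
  field_simp

theorem woodcockSum_div_sub_woodcockSum_div (μ ν : ℕ) :
    woodcockSum (μ + 1) ν / ((μ + 1)! * ν !) - woodcockSum (ν + 1) μ / ((ν + 1)! * μ !) =
      bernoulli (μ + 1) / (μ + 1)! * (bernoulli ν / ν !) -
        bernoulli μ / μ ! * (bernoulli (ν + 1) / (ν + 1)!) := by
  have hB : ∀ n, coeff n (bernoulliPowerSeries ℚ) = bernoulli n / n ! := by
    simp [bernoulliPowerSeries]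
  have h := congrArg (fun F => coeff (ν + 1) (coeff (μ + 1) F))
    bernoulliPowerSeries_two_variable_identity
  simp only [map_sub] at h
  convert h using 2
  · rw [mul_assoc, coeff_C_mul, coeff_succ_X_mul, coeff_mul, map_sum,
      ← sum_bernoulli_div_factorial_eq_woodcockSum_div]
    refine sum_congr rfl fun p _ => ?_
    rw [coeff_map, coeff_C_mul, coeff_coeff_rescale_neg_one_taylor, hB, hB]
  · rw [mul_assoc, coeff_succ_X_mul, coeff_C_mul, coeff_mul,
      ← sum_bernoulli_div_factorial_eq_woodcockSum_div]
    refine sum_congr rfl fun p _ => ?_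
    rw [coeff_coeff_rescale_neg_one_taylor_rescale_neg_one, hB, hB]
  · have hsplit : ((C X - X) * PowerSeries.map C (bernoulliPowerSeries ℚ) *
          C (bernoulliPowerSeries ℚ) : ℚ⟦X⟧⟦X⟧) =
        C (X * bernoulliPowerSeries ℚ) * PowerSeries.map C (bernoulliPowerSeries ℚ) -
          X * (C (bernoulliPowerSeries ℚ) * PowerSeries.map C (bernoulliPowerSeries ℚ)) := by
      rw [map_mul]
      ring
    simp only [hsplit, map_sub, coeff_C_mul, coeff_succ_X_mul, coeff_map, mul_comm _ (C _), hB]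

theorem woodcockSum_eq (m n : ℕ) :
    woodcockSum m n = bernoulli m * bernoulli n +
      ∑ k ∈ Icc 1 m, (m.choose k : ℚ) * (-1) ^ k * bernoulli (m - k) * bernoulli (n + k) := by
  rw [woodcockSum, sum_antidiagonal_eq_add_sum_Icc (fun i k =>
    (m.choose k : ℚ) * (-1) ^ k * bernoulli i * bernoulli (n + k))]
  simp

theorem woodcock (m n : ℕ) (hm : 1 ≤ m) (hn : 1 ≤ n) :
    (1 / (m : ℚ)) * ∑ k ∈ Icc 1 m,
        (m.choose k : ℚ) * (-1 : ℚ) ^ k * bernoulli (m - k) * bernoulli (n - 1 + k) =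
    (1 / (n : ℚ)) * ∑ k ∈ Icc 1 n,
        (n.choose k : ℚ) * (-1 : ℚ) ^ k * bernoulli (n - k) * bernoulli (m - 1 + k) := by
  obtain ⟨μ, rfl⟩ := Nat.exists_eq_add_of_le' hm
  obtain ⟨ν, rfl⟩ := Nat.exists_eq_add_of_le' hn
  have h := woodcockSum_div_sub_woodcockSum_div μ ν
  rw [woodcockSum_eq, woodcockSum_eq, Nat.factorial_succ, Nat.factorial_succ] at h
  simp only [Nat.add_sub_cancel]
  push_cast at h ⊢
  field_simp at h ⊢
  linear_combination h
end

section
/- For nonnegative integers k, l and real (or rational) numbers x, y, z with x + y + z = 1, (-1)^k * sum_{j=0}^{k} binomial(k,j) * x^{k-j} * B_{l+j}(y) = (-1)^l * sum_{j=0}^{l} binomial(l,j) * x^{l-j} * B_{k+j}(z). -/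
/-!
Umbrally, `B_n(y) = L((t + y)^n)` for the linear functional `L : t^n ↦ B_n` on `ℚ[t]`, so the two
sides are `(-1)^k L((t + y)^l (t + x + y)^k)` and `(-1)^l L((t + z)^k (t + x + z)^l)`. The reflection
formula `B_n(1 - u) = (-1)^n B_n(u)` says exactly that `L(p(t + 1)) = L(p(-t))` for every
polynomial `p`. Applied to `p(t) = (t + y - 1)^l (t - z)^k`, using `x + y = 1 - z` and
`x + z = 1 - y`, it turns one side into the other.
-/

open Finset

namespace Polynomial

noncomputable def bernoulliFunctional : ℚ[X] →ₗ[ℚ] ℚ :=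
  lsum fun n => _root_.bernoulli n • LinearMap.id

theorem bernoulliFunctional_monomial (n : ℕ) (a : ℚ) :
    bernoulliFunctional (monomial n a) = _root_.bernoulli n * a := by
  simp [bernoulliFunctional, sum_monomial_index]

theorem bernoulliFunctional_C_mul (a : ℚ) (p : ℚ[X]) :
    bernoulliFunctional (C a * p) = a * bernoulliFunctional p := by
  rw [C_mul', map_smul, smul_eq_mul]

theorem bernoulliFunctional_X_add_C_pow (y : ℚ) (n : ℕ) :
    bernoulliFunctional ((X + C y) ^ n) = (bernoulli n).eval y := by
  simp only [add_pow, map_sum, bernoulli, eval_finsetSum, eval_monomial]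
  refine sum_congr rfl fun i _ => ?_
  rw [← C_pow, ← C_eq_natCast, mul_assoc, ← C_mul, X_pow_mul_C, C_mul_X_pow_eq_monomial,
    bernoulliFunctional_monomial]
  ring

theorem bernoulliFunctional_X_add_C_pow_mul (k l : ℕ) (x y : ℚ) :
    bernoulliFunctional ((X + C y) ^ l * (X + C (x + y)) ^ k) =
      ∑ j ∈ range (k + 1), (k.choose j : ℚ) * x ^ (k - j) * (bernoulli (l + j)).eval y := by
  rw [C_add, add_comm (C x), ← add_assoc, add_pow (X + C y) (C x) k, mul_sum, map_sum]
  refine sum_congr rfl fun j _ => ?_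
  have hterm : (X + C y) ^ l * ((X + C y) ^ j * C x ^ (k - j) * (k.choose j : ℚ[X])) =
      C ((k.choose j : ℚ) * x ^ (k - j)) * (X + C y) ^ (l + j) := by
    rw [C_mul, C_pow, C_eq_natCast]
    ring
  rw [hterm, bernoulliFunctional_C_mul, bernoulliFunctional_X_add_C_pow]

theorem bernoulliFunctional_comp_X_add_one (p : ℚ[X]) :
    bernoulliFunctional (p.comp (X + 1)) = bernoulliFunctional (p.comp (-X)) := by
  induction p using Polynomial.induction_on' with
  | add p q hp hq => simp only [add_comp, map_add, hp, hq]
  | monomial n a =>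
    have h1 := bernoulliFunctional_X_add_C_pow 1 n
    have h0 := bernoulliFunctional_X_add_C_pow 0 n
    rw [map_one] at h1
    rw [map_zero, add_zero] at h0
    rw [monomial_comp, monomial_comp, bernoulliFunctional_C_mul, bernoulliFunctional_C_mul, h1,
      neg_pow, ← C_1, ← C_neg, ← C_pow, bernoulliFunctional_C_mul, h0,
      ← bernoulli_eval_one_sub, sub_zero]

end Polynomial

open Polynomial

theorem sun_bernoulli_poly (k l : ℕ) (x y z : ℚ) (h : x + y + z = 1) :
    (-1 : ℚ) ^ k * ∑ j ∈ range (k + 1),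
        (k.choose j : ℚ) * x ^ (k - j) * (Polynomial.bernoulli (l + j)).eval y =
    (-1 : ℚ) ^ l * ∑ j ∈ range (l + 1),
        (l.choose j : ℚ) * x ^ (l - j) * (Polynomial.bernoulli (k + j)).eval z := by
  set p : ℚ[X] := (X + C (y - 1)) ^ l * (X - C z) ^ k
  have hp_shift : p.comp (X + 1) = (X + C y) ^ l * (X + C (x + y)) ^ k := by
    rw [show x + y = 1 - z by linarith]
    simp only [p, mul_comp, pow_comp, add_comp, sub_comp, X_comp, C_comp, one_comp, map_sub, map_one]
    ring
  have hp_neg : p.comp (-X) = C ((-1) ^ (k + l)) * ((X + C z) ^ k * (X + C (x + z)) ^ l) := by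
    rw [show x + z = 1 - y by linarith]
    trans (-(X + C z)) ^ k * (-(X + C (1 - y))) ^ l
    · simp only [p, mul_comp, pow_comp, add_comp, sub_comp, X_comp, C_comp, one_comp, map_sub,
        map_one]
      ring
    · rw [neg_pow, neg_pow (X + C _), C_pow, C_neg, C_1]
      ring
  have hsymm := bernoulliFunctional_comp_X_add_one p
  rw [hp_shift, hp_neg, bernoulliFunctional_C_mul, bernoulliFunctional_X_add_C_pow_mul,
    bernoulliFunctional_X_add_C_pow_mul] at hsymm
  rw [hsymm, ← mul_assoc, ← pow_add, ← add_assoc, ← two_mul, pow_add, pow_mul, neg_one_sq, one_pow,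
    one_mul]
end

section
/- For nonnegative integers m, n and any x, (-1)^m * sum_{k=0}^{m} binomial(m+1,k) * (n+k+1) * B_{n+k}(x) + (-1)^n * sum_{k=0}^{n} binomial(n+1,k) * (m+k+1) * B_{m+k}(-x) = (-1)^m * (n+m+1) * (n+m+2) * x^{n+m}. -/
open Finset

open Polynomial

lemma key_eval (M N : ℕ) (x : ℚ) :
    ∑ k ∈ range (M + 2), ((M+1).choose k : ℚ) * (N+k+1) * x ^ (N+k)
      = ∑ k ∈ range (N + 2), ((N+1).choose k : ℚ) * (-1)^(N+1-k) * (M+k+1) * (x+1) ^ (M+k) := by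
  have e1 : (X^(N+1) * (X+1)^(M+1) : ℚ[X])
      = ∑ k ∈ range (M+2), C ((M+1).choose k : ℚ) * X^(N+1+k) := by
    rw [add_pow, mul_sum]
    refine sum_congr rfl fun k hk => ?_
    simp [pow_add, C_eq_natCast]
    ring
  have e2 : (X^(N+1) * (X+1)^(M+1) : ℚ[X])
      = ∑ k ∈ range (N+2), C (((N+1).choose k : ℚ) * (-1)^(N+1-k)) * (X+1)^(M+1+k) := by
    have hx : (X : ℚ[X]) = (X+1) + (-1) := by ring
    conv_lhs => rw [hx, add_pow, sum_mul]
    refine sum_congr rfl fun k hk => ?_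
    simp [pow_add, C_eq_natCast, C_mul]
    ring
  have d1 := congrArg (fun p => Polynomial.eval x (derivative p)) e1
  rw [e2] at d1
  simp only [derivative_sum, derivative_C_mul, derivative_X_pow, derivative_pow,
    derivative_add, derivative_X, derivative_one, add_zero, eval_finset_sum, eval_mul,
    eval_C, eval_pow, eval_add, eval_X, eval_one, mul_one] at d1
  calc ∑ k ∈ range (M + 2), ((M+1).choose k : ℚ) * (N+k+1) * x ^ (N+k)
      = ∑ k ∈ range (M+2), ((M+1).choose k : ℚ) * (((N+1+k : ℕ) : ℚ) * x ^ (N+1+k-1)) := by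
        refine sum_congr rfl fun k hk => ?_
        have h : N+1+k-1 = N+k := by omega
        rw [h]; push_cast; ring
    _ = ∑ k ∈ range (N+2), ((N+1).choose k : ℚ) * (-1)^(N+1-k) * (((M+1+k : ℕ) : ℚ) * (x+1)^(M+1+k-1)) :=
        d1.symm
    _ = ∑ k ∈ range (N + 2), ((N+1).choose k : ℚ) * (-1)^(N+1-k) * (M+k+1) * (x+1) ^ (M+k) := by
        refine sum_congr rfl fun k hk => ?_
        have h : M+1+k-1 = M+k := by omega
        rw [h]; push_cast; ring

lemma sign_aux (a b : ℕ) (h : b ≤ a) : ((-1 : ℚ))^(a - b) = (-1)^a * (-1)^b := by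
  have h1 : ((-1:ℚ))^(a-b) * (-1)^b = (-1)^a := by
    rw [← pow_add]; congr 1; omega
  have hb : ((-1:ℚ))^b * (-1)^b = 1 := by
    rw [← pow_add]; exact Even.neg_one_pow (Even.add_self b)
  calc ((-1 : ℚ))^(a - b) = ((-1:ℚ))^(a-b) * ((-1:ℚ)^b * (-1)^b) := by rw [hb, mul_one]
    _ = (-1)^a * (-1)^b := by rw [← mul_assoc, h1]

lemma dagger (m n : ℕ) (x : ℚ) :
    (-1:ℚ)^m * ∑ k ∈ range (m+1), ((m+1).choose k : ℚ) * (n+k+1) * x^(n+k)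
    + (-1:ℚ)^n * ∑ k ∈ range (n+1), ((n+1).choose k : ℚ) * (m+k+1) * (-(x+1))^(m+k)
    = (-1:ℚ)^m * (n+m+2) * ((x+1)^(n+m+1) - x^(n+m+1)) := by
  have hA := key_eval m n x
  conv at hA => lhs; rw [sum_range_succ]
  conv at hA => rhs; rw [sum_range_succ]
  simp only [Nat.choose_self, Nat.sub_self, pow_zero, Nat.cast_one, one_mul, mul_one] at hA
  push_cast at hA
  have hsum : (-1:ℚ)^n * ∑ k ∈ range (n+1), ((n+1).choose k : ℚ) * (m+k+1) * (-(x+1))^(m+k)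
      = -(-1:ℚ)^m * ∑ k ∈ range (n+1), ((n+1).choose k : ℚ) * (-1)^(n+1-k) * (m+k+1) * (x+1)^(m+k) := by
    rw [mul_sum, mul_sum]
    refine sum_congr rfl fun k hk => ?_
    have hk' : k ≤ n + 1 := by simp at hk; omega
    rw [show (-(x+1) : ℚ) = (-1) * (x+1) by ring, mul_pow, sign_aux (n+1) k hk']
    ring
  rw [hsum]
  linear_combination ((-1:ℚ)^m) * hA

noncomputable def PP (m n : ℕ) : Polynomial ℚ :=
  C ((-1:ℚ)^m) * ∑ k ∈ range (m+1), C (((m+1).choose k : ℚ)) * Polynomial.bernoulli (n+k+1)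
  - C ((-1:ℚ)^n) * ∑ k ∈ range (n+1), C (((n+1).choose k : ℚ)) * (Polynomial.bernoulli (m+k+1)).comp (-X)
  - C ((-1:ℚ)^m * (n+m+2)) * X^(n+m+1)

lemma PP_eval (m n : ℕ) (x : ℚ) : (PP m n).eval x
    = (-1:ℚ)^m * ∑ k ∈ range (m+1), ((m+1).choose k : ℚ) * (Polynomial.bernoulli (n+k+1)).eval x
    - (-1:ℚ)^n * ∑ k ∈ range (n+1), ((n+1).choose k : ℚ) * (Polynomial.bernoulli (m+k+1)).eval (-x)
    - (-1:ℚ)^m * (n+m+2) * x^(n+m+1) := by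
  simp [PP, eval_finset_sum, eval_comp]

lemma bern_step (j : ℕ) (y : ℚ) :
    (Polynomial.bernoulli (j+1)).eval (y+1) = (Polynomial.bernoulli (j+1)).eval y + (j+1) * y^j := by
  have := Polynomial.bernoulli_eval_one_add (j+1) y
  rw [add_comm 1 y] at this
  simpa using this

lemma PP_period (m n : ℕ) (x : ℚ) : (PP m n).eval (x+1) = (PP m n).eval x := by
  rw [PP_eval, PP_eval]
  have h1 : ∑ k ∈ range (m+1), ((m+1).choose k : ℚ) * (Polynomial.bernoulli (n+k+1)).eval (x+1)
      = ∑ k ∈ range (m+1), ((m+1).choose k : ℚ) * (Polynomial.bernoulli (n+k+1)).eval x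
        + ∑ k ∈ range (m+1), ((m+1).choose k : ℚ) * (n+k+1) * x^(n+k) := by
    rw [← sum_add_distrib]
    refine sum_congr rfl fun k hk => ?_
    rw [bern_step (n+k) x]
    push_cast; ring
  have h2 : ∑ k ∈ range (n+1), ((n+1).choose k : ℚ) * (Polynomial.bernoulli (m+k+1)).eval (-x)
      = ∑ k ∈ range (n+1), ((n+1).choose k : ℚ) * (Polynomial.bernoulli (m+k+1)).eval (-(x+1))
        + ∑ k ∈ range (n+1), ((n+1).choose k : ℚ) * (m+k+1) * (-(x+1))^(m+k) := by
    rw [← sum_add_distrib]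
    refine sum_congr rfl fun k hk => ?_
    have := bern_step (m+k) (-(x+1))
    rw [show (-(x+1) + 1 : ℚ) = -x by ring] at this
    rw [this]
    push_cast; ring
  rw [h1, h2]
  have := dagger m n x
  linear_combination this

lemma PP_deriv_zero (m n : ℕ) : Polynomial.derivative (PP m n) = 0 := by
  have hper := PP_period m n
  have hnat : ∀ k : ℕ, (PP m n).eval (k:ℚ) = (PP m n).eval 0 := by
    intro k; induction k with
    | zero => norm_num
    | succ k ih => push_cast; rw [hper]; exact_mod_cast ih
  have hzero : PP m n - C ((PP m n).eval 0) = 0 := by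
    apply Polynomial.eq_zero_of_infinite_isRoot
    refine Set.Infinite.mono ?_ (Set.infinite_range_of_injective (Nat.cast_injective (R := ℚ)))
    rintro y ⟨k, rfl⟩
    simp [IsRoot, hnat k]
  have h : PP m n = C ((PP m n).eval 0) := by
    have := sub_eq_zero.mp hzero; exact this
  rw [h]; simp

lemma e1 (m n : ℕ) (x : ℚ) :
    Polynomial.eval x (Polynomial.derivative
        (∑ k ∈ range (m+1), C (((m+1).choose k : ℚ)) * Polynomial.bernoulli (n+k+1)))
      = ∑ k ∈ range (m+1), ((m+1).choose k : ℚ) * (n+k+1) * (Polynomial.bernoulli (n+k)).eval x := by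
  rw [derivative_sum]
  simp only [derivative_C_mul, Polynomial.derivative_bernoulli_add_one, eval_finset_sum,
    eval_mul, eval_C, eval_add, eval_natCast, eval_one]
  refine sum_congr rfl fun k hk => ?_
  push_cast; ring

lemma e2 (m n : ℕ) (x : ℚ) :
    Polynomial.eval x (Polynomial.derivative
        (∑ k ∈ range (n+1), C (((n+1).choose k : ℚ)) * (Polynomial.bernoulli (m+k+1)).comp (-X)))
      = -∑ k ∈ range (n+1), ((n+1).choose k : ℚ) * (m+k+1) * (Polynomial.bernoulli (m+k)).eval (-x) := by
  rw [derivative_sum, ← Finset.sum_neg_distrib]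
  simp only [derivative_C_mul, derivative_comp, derivative_neg, derivative_X,
    Polynomial.derivative_bernoulli_add_one, eval_finset_sum]
  refine sum_congr rfl fun k hk => ?_
  simp only [eval_mul, eval_C, eval_neg, eval_one, eval_comp, eval_add, eval_natCast, eval_X]
  push_cast; ring

theorem wu_sun_pan_bernoulli_poly (m n : ℕ) (x : ℚ) :
    (-1 : ℚ) ^ m * ∑ k ∈ range (m + 1),
        ((m + 1).choose k : ℚ) * (n + k + 1) * (Polynomial.bernoulli (n + k)).eval x
      + (-1 : ℚ) ^ n * ∑ k ∈ range (n + 1),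
        ((n + 1).choose k : ℚ) * (m + k + 1) * (Polynomial.bernoulli (m + k)).eval (-x)
    = (-1 : ℚ) ^ m * (n + m + 1) * (n + m + 2) * x ^ (n + m) := by
  have hd : Polynomial.eval x (Polynomial.derivative (PP m n)) = 0 := by
    rw [PP_deriv_zero]; simp
  have he : Polynomial.eval x (Polynomial.derivative (PP m n))
      = (-1:ℚ)^m * ∑ k ∈ range (m+1), ((m+1).choose k : ℚ) * (n+k+1) * (Polynomial.bernoulli (n+k)).eval x
      + (-1:ℚ)^n * ∑ k ∈ range (n+1), ((n+1).choose k : ℚ) * (m+k+1) * (Polynomial.bernoulli (m+k)).eval (-x)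
      - (-1:ℚ)^m * (n+m+2) * (n+m+1) * x^(n+m) := by
    rw [PP, derivative_sub, derivative_sub, derivative_C_mul, derivative_C_mul,
      derivative_C_mul, eval_sub, eval_sub, eval_mul, eval_mul, eval_mul, eval_C, eval_C, eval_C,
      e1 m n x, e2 m n x, derivative_X_pow, eval_mul, eval_C, eval_pow, eval_X, Nat.add_sub_cancel]
    push_cast
    ring
  linear_combination hd - he
end

section
/- For nonnegative integers k, l and x, y, z with x + y + z = 1, (-1)^k * sum_{j=0}^{k} binomial(k+1,j) * x^{k-j+1} * (l+j+1) * B_{l+j}(y) + (-1)^l * sum_{j=0}^{l} binomial(l+1,j) * x^{l-j+1} * (k+j+1) * B_{k+j}(z) = (-1)^k * (k+l+2) * (B_{k+l+1}(x+y) - B_{k+l+1}(y)). -/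
/-!
Let `L : ℚ[X] → ℚ` be the linear functional `Xⁿ ↦ Bₙ` (the Bernoulli umbra). The defining
formula `Bₙ(X) = ∑ (n choose i) Bᵢ X^(n-i)` says exactly that `L ((X + c)ⁿ) = Bₙ(c)`, hence
`L (((X + c)ⁿ⁺¹)') = (n + 1) Bₙ(c)`. After the reflection `B_m(1 - w) = (-1)^m B_m(w)` removes `z`,
both sides of the theorem are the image under `p ↦ L p'` of the two sides of a binomial-theorem
identity in the ring `ℚ[X]`, taken at `t = X + y`, `a = x`:
`(-1)^k t^(l+1) ((t+a)^(k+1) - t^(k+1)) + (-1)^(k+1) (t+a)^(k+1) (t^(l+1) - (t+a)^(l+1))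
  = (-1)^k ((t+a)^(k+l+2) - t^(k+l+2))`.
-/

open Finset Polynomial

theorem sum_range_choose_mul_pow_mul_pow {R : Type*} [CommRing R] (u v : R) (n : ℕ) :
    ∑ j ∈ range n, (n.choose j : R) * v ^ (n - j) * u ^ j = (u + v) ^ n - u ^ n := by
  rw [add_pow, sum_range_succ, Nat.sub_self, Nat.choose_self]
  simp only [pow_zero, Nat.cast_one, mul_one, add_sub_cancel_right]
  exact sum_congr rfl fun j _ => by ring

theorem sun_polynomial_identity {R : Type*} [CommRing R] (k l : ℕ) (a t : R) :
    (-1) ^ k * ∑ j ∈ range (k + 1), ((k + 1).choose j : R) * a ^ (k - j + 1) * t ^ (l + j + 1)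
      + (-1) ^ l * ∑ j ∈ range (l + 1),
          ((l + 1).choose j : R) * a ^ (l - j + 1) * (-1) ^ (k + j) * (t + a) ^ (k + j + 1)
      = (-1) ^ k * ((t + a) ^ (k + l + 2) - t ^ (k + l + 2)) := by
  have h₁ : ∑ j ∈ range (k + 1), ((k + 1).choose j : R) * a ^ (k - j + 1) * t ^ (l + j + 1)
      = t ^ (l + 1) * ((t + a) ^ (k + 1) - t ^ (k + 1)) := by
    rw [← sum_range_choose_mul_pow_mul_pow, mul_sum]
    refine sum_congr rfl fun j hj => ?_
    rw [Nat.sub_add_comm (by simpa [Nat.lt_succ_iff] using hj)]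
    ring
  have h₂ : ∑ j ∈ range (l + 1),
      ((l + 1).choose j : R) * a ^ (l - j + 1) * (-1) ^ (k + j) * (t + a) ^ (k + j + 1)
      = (-1) ^ k * (t + a) ^ (k + 1) * ((-t) ^ (l + 1) - (-(t + a)) ^ (l + 1)) := by
    rw [show -t = -(t + a) + a by ring, ← sum_range_choose_mul_pow_mul_pow, mul_sum]
    refine sum_congr rfl fun j hj => ?_
    rw [Nat.sub_add_comm (by simpa [Nat.lt_succ_iff] using hj), neg_pow (t + a)]
    ring
  have hl : ((-1 : R) ^ l) ^ 2 = 1 := by rw [← pow_mul, mul_comm, pow_mul, neg_one_sq, one_pow]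
  rw [h₁, h₂, neg_pow t, neg_pow (t + a)]
  linear_combination -(-1) ^ k * (t + a) ^ (k + 1) * (t ^ (l + 1) - (t + a) ^ (l + 1)) * hl

noncomputable def bernoulliUmbra : ℚ[X] →ₗ[ℚ] ℚ :=
  lsum fun i => _root_.bernoulli i • LinearMap.id

theorem bernoulliUmbra_monomial (n : ℕ) (a : ℚ) :
    bernoulliUmbra (monomial n a) = _root_.bernoulli n * a := by
  simp [bernoulliUmbra]

theorem bernoulliUmbra_C_mul (r : ℚ) (p : ℚ[X]) :
    bernoulliUmbra (C r * p) = r * bernoulliUmbra p := by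
  rw [C_mul', map_smul, smul_eq_mul]

theorem bernoulliUmbra_X_add_C_pow (c : ℚ) (n : ℕ) :
    bernoulliUmbra ((X + C c) ^ n) = (Polynomial.bernoulli n).eval c := by
  rw [add_pow, Polynomial.bernoulli, map_sum, eval_finsetSum]
  refine sum_congr rfl fun i _ => ?_
  rw [← C_pow, ← C_eq_natCast, mul_assoc, ← C_mul, mul_comm (X ^ i), C_mul_X_pow_eq_monomial,
    bernoulliUmbra_monomial, eval_monomial]
  ring

theorem bernoulliUmbra_derivative_X_add_C_pow_succ (c : ℚ) (n : ℕ) :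
    bernoulliUmbra (derivative ((X + C c) ^ (n + 1)))
      = (n + 1) * (Polynomial.bernoulli n).eval c := by
  rw [derivative_X_add_C_pow, bernoulliUmbra_C_mul, Nat.add_sub_cancel, bernoulliUmbra_X_add_C_pow]
  push_cast
  ring

theorem sun_bernoulli_poly_deriv (k l : ℕ) (x y z : ℚ) (h : x + y + z = 1) :
    (-1 : ℚ) ^ k * ∑ j ∈ range (k + 1),
        ((k + 1).choose j : ℚ) * x ^ (k - j + 1) * (l + j + 1) *
          (Polynomial.bernoulli (l + j)).eval y
      + (-1 : ℚ) ^ l * ∑ j ∈ range (l + 1),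
        ((l + 1).choose j : ℚ) * x ^ (l - j + 1) * (k + j + 1) *
          (Polynomial.bernoulli (k + j)).eval z
    = (-1 : ℚ) ^ k * (k + l + 2) *
        ((Polynomial.bernoulli (k + l + 1)).eval (x + y) -
          (Polynomial.bernoulli (k + l + 1)).eval y) := by
  obtain rfl : z = 1 - (x + y) := by linarith
  have key := congrArg (bernoulliUmbra ∘ₗ derivative) (sun_polynomial_identity k l (C x) (X + C y))
  rw [add_assoc, ← C_add, add_comm y x, show k + l + 2 = k + l + 1 + 1 by ring] at key
  simp only [← C_pow, ← C_eq_natCast, ← C_neg, ← C_1, ← C_mul, derivative_add, derivative_sub,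
    derivative_sum, derivative_C_mul, map_add bernoulliUmbra, map_sub bernoulliUmbra,
    map_sum bernoulliUmbra, LinearMap.comp_apply, bernoulliUmbra_C_mul,
    bernoulliUmbra_derivative_X_add_C_pow_succ] at key
  simp only [bernoulli_eval_one_sub]
  convert key using 1
  · congr 2 <;> exact sum_congr rfl fun j _ => by push_cast; ring
  · push_cast; ring
end

section
/- For nonnegative integers m and n, (-1)^m * sum_{k=0}^{m} binomial(m,k) * E_{n+k} / 2^{n+k} = (-1)^n * sum_{j=0}^{n} binomial(n,j) * E_{m+j}(-1/2), where E_j are the Euler numbers and E_r(x) are the Euler polynomials. -/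
open Finset

/-- The Euler polynomials `E n`, defined by the recurrence
`E n = X^n - (1/2) * ∑_{k<n} (n choose k) E k`, equivalent to the
generating function `2 e^{xt}/(e^t+1) = ∑ E_n(x) t^n/n!`. -/
noncomputable def eulerPoly : ℕ → Polynomial ℚ
  | n => Polynomial.X ^ n - Polynomial.C (1/2 : ℚ) *
      ∑ k : Fin n, Polynomial.C ((n.choose k : ℚ)) * eulerPoly k

/-- The Euler numbers, `E n = 2^n * E_n(1/2)`. -/
noncomputable def eulerNumber (n : ℕ) : ℚ := 2 ^ n * (eulerPoly n).eval (1/2 : ℚ)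

/-!
Write `A m n = ∑ₖ C(m,k) E_{n+k}(x)` and `B m n = ∑ⱼ C(n,j) E_{m+j}(-x)`. Pascal's rule gives
`A (m+1) n = A m n + A m (n+1)` and `B m (n+1) = B m n + B (m+1) n`, so
`(-1)^m A m n = (-1)^n B m n` follows by induction on `m` from the case `m = 0`.
Since the `E_n` form an Appell sequence, `E_n(y+1) = ∑ⱼ C(n,j) E_j(y)`, and the case `m = 0`
is the reflection formula `E_n(1-x) = (-1)^n E_n(x)`.
That holds because both sides satisfy `P(y+1) + P(y) = 2yⁿ`, while a polynomial with
`P(y+1) + P(y) = 0` has period 2 and therefore vanishes. The theorem is the case `x = 1/2`.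
-/

open Polynomial

theorem sum_range_choose_succ_mul {R : Type*} [CommRing R] (a : ℕ → R) (m : ℕ) :
    ∑ k ∈ range (m + 1 + 1), ((m + 1).choose k : R) * a k =
      ∑ k ∈ range (m + 1), (m.choose k : R) * a k +
        ∑ k ∈ range (m + 1), (m.choose k : R) * a (1 + k) := by
  simpa only [add_comm 1] using sum_choose_succ_mul (fun i _ => a i) m

theorem neg_one_pow_mul_sum_choose_add {R : Type*} [CommRing R] {e f : ℕ → R}
    (h : ∀ n, e n = (-1) ^ n * ∑ j ∈ range (n + 1), (n.choose j : R) * f j) (m n : ℕ) :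
    (-1) ^ m * ∑ k ∈ range (m + 1), (m.choose k : R) * e (n + k) =
      (-1) ^ n * ∑ j ∈ range (n + 1), (n.choose j : R) * f (m + j) := by
  induction m generalizing n with
  | zero => simpa using h n
  | succ m ih =>
    have hA := sum_range_choose_succ_mul (fun k => e (n + k)) m
    have hB := sum_range_choose_succ_mul (fun j => f (m + j)) n
    simp only [← add_assoc] at hA hB
    linear_combination (-1) ^ (m + 1) * hA - ih n - ih (n + 1) + (-1) ^ n * hB

theorem Polynomial.eq_zero_of_eval_add_one_add_eval {R : Type*} [CommRing R] [IsDomain R]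
    [CharZero R] {p : R[X]} (h : ∀ x, p.eval (x + 1) + p.eval x = 0) : p = 0 := by
  have periodic (x : R) : p.eval (x + 2) = p.eval x := by
    have := h (x + 1)
    rw [add_assoc, one_add_one_eq_two] at this
    linear_combination this - h x
  have hconst : p = C (p.eval 0) := by
    apply eq_of_infinite_eval_eq
    refine Set.infinite_of_injective_forall_mem (f := fun k : ℕ => (2 * k : R)) ?_ fun k => ?_
    · intro i j hij
      simpa using hij
    · induction k with
      | zero => simp
      | succ k ih => simpa [mul_add, mul_one, periodic] using ih
  have h0 := h 0
  rw [hconst] at h0 ⊢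
  simpa [← two_mul] using h0

theorem eulerPoly_def (n : ℕ) : eulerPoly n =
    X ^ n - C (1 / 2 : ℚ) * ∑ k ∈ range n, C (n.choose k : ℚ) * eulerPoly k := by
  rw [eulerPoly, Fin.sum_univ_eq_sum_range (fun k => C (n.choose k : ℚ) * eulerPoly k)]

theorem eulerPoly_zero : eulerPoly 0 = 1 := by
  rw [eulerPoly_def]; simp

theorem natDegree_eulerPoly_le (n : ℕ) : (eulerPoly n).natDegree ≤ n := by
  induction n using Nat.strong_induction_on with
  | _ n ih =>
    rw [eulerPoly_def]
    refine (natDegree_sub_le _ _).trans (max_le (natDegree_X_pow_le n) ?_)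
    refine natDegree_C_mul_le _ _ |>.trans <| natDegree_sum_le_of_forall_le _ _ fun k hk => ?_
    exact (natDegree_C_mul_le _ _).trans ((ih k (mem_range.mp hk)).trans (mem_range.mp hk).le)

theorem derivative_eulerPoly_succ (n : ℕ) :
    derivative (eulerPoly (n + 1)) = (n + 1) * eulerPoly n := by
  induction n using Nat.strong_induction_on with
  | _ n ih =>
    have hterm : ∀ k ∈ range n, C ((n + 1).choose (k + 1) : ℚ) * derivative (eulerPoly (k + 1)) =
        (n + 1) * (C (n.choose k : ℚ) * eulerPoly k) := by
      intro k hk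
      rw [ih k (mem_range.mp hk), ← mul_assoc, ← mul_assoc]
      congr 1
      simp only [← C_eq_natCast, ← C_1, ← C_add, ← C_mul]
      exact congrArg C (mod_cast (Nat.add_one_mul_choose_eq n k).symm)
    rw [eulerPoly_def (n + 1), eulerPoly_def n, derivative_sub, derivative_X_pow, derivative_C_mul,
      derivative_sum, sum_range_succ']
    simp only [derivative_C_mul, sum_congr rfl hterm, eulerPoly_zero, derivative_one, ← mul_sum]
    simp only [Nat.choose_zero_right, mul_zero, add_zero, add_tsub_cancel_right, map_natCast]
    push_cast
    ring

theorem iterate_derivative_eulerPoly_add (n k : ℕ) :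
    derivative^[k] (eulerPoly (n + k)) = ((n + k).descFactorial k : ℚ[X]) * eulerPoly n := by
  induction k with
  | zero => simp
  | succ k ih =>
    rw [Function.iterate_succ_apply, ← add_assoc, derivative_eulerPoly_succ,
      ← Nat.cast_add_one, iterate_derivative_natCast_mul, ih, ← mul_assoc,
      Nat.succ_descFactorial_succ, Nat.cast_mul]

theorem hasseDeriv_eulerPoly_add (n k : ℕ) :
    hasseDeriv k (eulerPoly (n + k)) = ((n + k).choose k : ℚ[X]) * eulerPoly n := by
  have h := congrFun (factorial_smul_hasseDeriv (R := ℚ) (k := k)) (eulerPoly (n + k))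
  rw [LinearMap.smul_apply, iterate_derivative_eulerPoly_add,
    Nat.descFactorial_eq_factorial_mul_choose, Nat.cast_mul, mul_assoc, ← nsmul_eq_mul] at h
  exact nsmul_right_injective (Nat.factorial_ne_zero k) h

theorem eulerPoly_eval_add (n : ℕ) (x y : ℚ) :
    (eulerPoly n).eval (x + y) =
      ∑ k ∈ range (n + 1), (n.choose k : ℚ) * (eulerPoly k).eval x * y ^ (n - k) := by
  rw [add_comm, ← taylor_eval, eval_eq_sum_range' ((natDegree_taylor _ _).trans_lt
    (Nat.lt_add_one_of_le (natDegree_eulerPoly_le n))), ← sum_range_reflect]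
  refine sum_congr rfl fun k hk => ?_
  obtain ⟨j, rfl⟩ := Nat.exists_eq_add_of_le (Nat.lt_succ_iff.mp (mem_range.mp hk))
  rw [add_tsub_cancel_right, add_tsub_cancel_left, taylor_coeff, hasseDeriv_eulerPoly_add,
    Nat.choose_symm_add]
  simp [mul_comm]

theorem eulerPoly_eval_add_one (n : ℕ) (x : ℚ) :
    (eulerPoly n).eval (x + 1) = ∑ k ∈ range (n + 1), (n.choose k : ℚ) * (eulerPoly k).eval x := by
  simpa using eulerPoly_eval_add n x 1

theorem eulerPoly_eval_add_one_add_eval (n : ℕ) (x : ℚ) :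
    (eulerPoly n).eval (x + 1) + (eulerPoly n).eval x = 2 * x ^ n := by
  have hrec := congrArg (eval x) (eulerPoly_def n)
  simp only [eval_sub, eval_mul, eval_pow, eval_X, eval_C, eval_finsetSum] at hrec
  rw [eulerPoly_eval_add_one, sum_range_succ, Nat.choose_self, Nat.cast_one, one_mul]
  linear_combination 2 * hrec

theorem eulerPoly_eval_one_sub (n : ℕ) (x : ℚ) :
    (eulerPoly n).eval (1 - x) = (-1) ^ n * (eulerPoly n).eval x := by
  have h : C ((-1) ^ n) * eulerPoly n - (eulerPoly n).comp (1 - X) = 0 := by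
    refine eq_zero_of_eval_add_one_add_eval fun y => ?_
    have hneg := eulerPoly_eval_add_one_add_eval n (-y)
    rw [neg_add_eq_sub, neg_pow] at hneg
    simp only [eval_sub, eval_mul, eval_C, eval_comp, eval_one, eval_X, sub_add_cancel_right]
    linear_combination (-1) ^ n * eulerPoly_eval_add_one_add_eval n y - hneg
  simpa using congrArg (eval x) (sub_eq_zero.mp h).symm

theorem eulerPoly_eval_eq_neg_one_pow_mul_sum (n : ℕ) (x : ℚ) :
    (eulerPoly n).eval x =
      (-1) ^ n * ∑ j ∈ range (n + 1), (n.choose j : ℚ) * (eulerPoly j).eval (-x) := by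
  rw [← eulerPoly_eval_add_one, neg_add_eq_sub, eulerPoly_eval_one_sub, ← mul_assoc, ← mul_pow]
  simp

theorem neg_one_pow_mul_sum_choose_eulerPoly_eval (m n : ℕ) (x : ℚ) :
    (-1) ^ m * ∑ k ∈ range (m + 1), (m.choose k : ℚ) * (eulerPoly (n + k)).eval x =
      (-1) ^ n * ∑ j ∈ range (n + 1), (n.choose j : ℚ) * (eulerPoly (m + j)).eval (-x) :=
  neg_one_pow_mul_sum_choose_add (eulerPoly_eval_eq_neg_one_pow_mul_sum · x) m n

theorem wu_sun_pan_euler (m n : ℕ) :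
    (-1 : ℚ) ^ m * ∑ k ∈ range (m + 1), (m.choose k : ℚ) * eulerNumber (n + k) / 2 ^ (n + k) =
    (-1 : ℚ) ^ n * ∑ j ∈ range (n + 1),
        (n.choose j : ℚ) * (eulerPoly (m + j)).eval (-(1/2) : ℚ) := by
  have hE (k : ℕ) : eulerNumber k / 2 ^ k = (eulerPoly k).eval (1 / 2) := by
    rw [eulerNumber, mul_div_cancel_left₀ _ (pow_ne_zero k two_ne_zero)]
  simp only [mul_div_assoc, hE]
  exact neg_one_pow_mul_sum_choose_eulerPoly_eval m n (1 / 2)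
end

section
/- For nonnegative integers m, n and any x, (-1)^m * sum_{k=0}^{m} binomial(m,k) * E_{n+k}(x) = (-1)^n * sum_{k=0}^{n} binomial(n,k) * E_{m+k}(-x). -/
open Finset

lemma euler_rec (n : ℕ) (x : ℚ) :
    (eulerPoly n).eval x = x^n - (1/2) * ∑ k ∈ range n, (n.choose k : ℚ) * (eulerPoly k).eval x := by
  rw [eulerPoly]
  simp [Polynomial.eval_finset_sum]
  rw [Fin.sum_univ_eq_sum_range (fun k => (n.choose k : ℚ) * (eulerPoly k).eval x)]

lemma euler_rec' (n : ℕ) (x : ℚ) :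
    (eulerPoly n).eval x + ∑ k ∈ range (n+1), (n.choose k : ℚ) * (eulerPoly k).eval x
      = 2 * x ^ n := by
  rw [sum_range_succ, Nat.choose_self]
  have h := euler_rec n x
  have h2 : ∑ k ∈ range n, (n.choose k : ℚ) * (eulerPoly k).eval x
      = 2 * (x ^ n - (eulerPoly n).eval x) := by
    rw [h]; ring
  rw [h2]; push_cast; ring

lemma chooseSum (m : ℕ) : ∀ n j : ℕ,
    ∑ k ∈ range (m+1), (-1:ℚ)^k * (m.choose k) * ((n+k).choose j)
      = (-1)^m * (if m ≤ j then ((n.choose (j-m)) : ℚ) else 0) := by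
  induction m with
  | zero => intro n j; simp
  | succ m ih =>
    intro n j
    rw [Finset.sum_range_succ']
    have expand : ∀ k ∈ range (m+1),
        (-1:ℚ)^(k+1) * ((m+1).choose (k+1)) * ((n+(k+1)).choose j)
        = -((-1:ℚ)^k * (m.choose k) * ((n+k+1).choose j))
          + -((-1:ℚ)^k * (m.choose (k+1)) * ((n+(k+1)).choose j)) := by
      intro k _
      rw [Nat.choose_succ_succ']
      push_cast
      ring_nf
    rw [Finset.sum_congr rfl expand, Finset.sum_add_distrib]
    have e1 : ∑ k ∈ range (m+1), -((-1:ℚ)^k * (m.choose k) * ((n+k+1).choose j))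
        = -∑ k ∈ range (m+1), (-1:ℚ)^k * (m.choose k) * (((n+1)+k).choose j) := by
      rw [← Finset.sum_neg_distrib]
      exact Finset.sum_congr rfl fun k _ => by rw [show n + 1 + k = n + k + 1 by ring]
    have e2 : ∑ k ∈ range (m+1), -((-1:ℚ)^k * (m.choose (k+1)) * ((n+(k+1)).choose j))
          + (-1:ℚ)^0 * ((m+1).choose 0) * ((n+0).choose j)
        = ∑ k ∈ range (m+1), (-1:ℚ)^k * (m.choose k) * ((n+k).choose j) := by
      rw [Finset.sum_range_succ' (fun k => (-1:ℚ)^k * (m.choose k) * ((n+k).choose j))]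
      congr 1
      · rw [Finset.sum_range_succ, Nat.choose_succ_self]
        simp only [Nat.cast_zero, mul_zero, zero_mul, neg_zero, add_zero]
        exact Finset.sum_congr rfl fun k _ => by ring_nf
      · simp
    rw [add_assoc, e1, e2, ih, ih]
    rcases le_or_gt (m+1) j with h | h
    · have hm : m ≤ j := Nat.le_of_succ_le h
      have h1 : 1 ≤ j - m := Nat.le_sub_of_add_le (by omega)
      rw [if_pos hm, if_pos hm, if_pos h]
      have hc : ((n+1).choose (j-m) : ℚ) = (n.choose (j-m-1) : ℚ) + (n.choose (j-m) : ℚ) := by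
        have : j - m = (j - m - 1) + 1 := by omega
        rw [this, Nat.choose_succ_succ]
        push_cast; ring
      have hjm : j - (m+1) = j - m - 1 := by omega
      rw [hjm, hc]
      ring
    · rw [if_neg (show ¬ (m+1 ≤ j) from by omega)]
      rcases le_or_gt m j with hm | hm
      · have hjm : j = m := by omega
        subst hjm
        rw [if_pos le_rfl, if_pos le_rfl, Nat.sub_self]
        simp
      · rw [if_neg (Nat.not_le.2 hm), if_neg (Nat.not_le.2 hm)]
        ring

lemma euler_star (n : ℕ) : ∀ x : ℚ, (eulerPoly n).eval x
    = (-1)^n * ∑ k ∈ range (n+1), (n.choose k : ℚ) * (eulerPoly k).eval (-x) := by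
  induction n using Nat.strong_induction_on with
  | _ n ih =>
  intro x
  have hnn : (-1:ℚ)^n * (-1)^n = 1 := by
    rw [← pow_add]
    exact Even.neg_one_pow ⟨n, rfl⟩
  -- the inner orthogonality
  have inner : ∀ j ∈ range n,
      ∑ k ∈ range n, (-1:ℚ)^k * (n.choose k) * (k.choose j) = -(-1:ℚ)^n * (n.choose j) := by
    intro j hj
    have hj' : j < n := mem_range.1 hj
    have h := chooseSum n 0 j
    rw [Finset.sum_range_succ, if_neg (by omega)] at h
    simp only [zero_add, mul_zero] at h
    have hsub : ∑ k ∈ range n, (-1:ℚ)^k * (n.choose k) * (k.choose j)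
        = -((-1:ℚ)^n * (n.choose n) * (n.choose j)) := by linarith
    rw [hsub, Nat.choose_self]
    push_cast; ring
  -- the key swap identity (dagger)
  have dagger : ∑ k ∈ range n, ((-1:ℚ)^k * (n.choose k))
        * (∑ j ∈ range (k+1), (k.choose j : ℚ) * (eulerPoly j).eval x)
      = -(-1:ℚ)^n * ∑ j ∈ range n, (n.choose j : ℚ) * (eulerPoly j).eval x := by
    have ext : ∀ k ∈ range n,
        ((-1:ℚ)^k * (n.choose k)) * (∑ j ∈ range (k+1), (k.choose j : ℚ) * (eulerPoly j).eval x)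
        = ∑ j ∈ range n, ((-1:ℚ)^k * (n.choose k)) * ((k.choose j : ℚ) * (eulerPoly j).eval x) := by
      intro k hk
      rw [Finset.mul_sum]
      apply Finset.sum_subset (Finset.range_subset_range.2 (mem_range.1 hk))
      intro j _ hj
      have hkj : k < j := by simp only [mem_range, not_lt] at hj; omega
      rw [Nat.choose_eq_zero_of_lt hkj]
      push_cast; ring
    rw [Finset.sum_congr rfl ext, Finset.sum_comm, Finset.mul_sum]
    refine Finset.sum_congr rfl fun j hj => ?_
    have : ∑ k ∈ range n, ((-1:ℚ)^k * (n.choose k)) * ((k.choose j : ℚ) * (eulerPoly j).eval x)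
        = (∑ k ∈ range n, (-1:ℚ)^k * (n.choose k) * (k.choose j)) * (eulerPoly j).eval x := by
      rw [Finset.sum_mul]
      exact Finset.sum_congr rfl fun k _ => by ring
    rw [this, inner j hj]
    ring
  -- names
  set a := (eulerPoly n).eval x with ha
  set b := (eulerPoly n).eval (-x) with hb
  set P := ∑ j ∈ range n, (n.choose j : ℚ) * (eulerPoly j).eval x with hP
  set Q := ∑ k ∈ range n, (n.choose k : ℚ) * (eulerPoly k).eval (-x) with hQdef
  set S := ∑ k ∈ range (n+1), (n.choose k : ℚ) * (eulerPoly k).eval (-x) with hSdef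
  have hQ : Q = -(-1:ℚ)^n * P := by
    rw [hQdef, ← dagger]
    refine Finset.sum_congr rfl fun k hk => ?_
    rw [ih k (mem_range.1 hk) (-x)]
    simp only [neg_neg]
    ring
  have hS : S = Q + b := by
    rw [hSdef, hQdef, Finset.sum_range_succ, Nat.choose_self]
    push_cast; ring
  have h1 : a + (P + 1 * a) = 2 * x ^ n := by
    have := euler_rec' n x
    rw [Finset.sum_range_succ, Nat.choose_self] at this
    push_cast at this
    rw [ha, hP]; linarith
  have h2 : b + S = 2 * ((-1:ℚ)^n * x ^ n) := by
    have := euler_rec' n (-x)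
    rw [neg_pow] at this
    exact this
  show a = (-1:ℚ)^n * S
  linear_combination (1/2)*h1 + (-(-1:ℚ)^n/2)*h2 + (-(-1:ℚ)^n/2)*hS
    + (-(-1:ℚ)^n/2)*hQ + (P/2 - x^n)*hnn

theorem wu_sun_pan_euler_poly (m n : ℕ) (x : ℚ) :
    (-1 : ℚ) ^ m * ∑ k ∈ range (m + 1), (m.choose k : ℚ) * (eulerPoly (n + k)).eval x =
    (-1 : ℚ) ^ n * ∑ k ∈ range (n + 1), (n.choose k : ℚ) * (eulerPoly (m + k)).eval (-x) := by
  have key : ∀ k ∈ range (m+1), (m.choose k : ℚ) * (eulerPoly (n+k)).eval x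
      = ∑ j ∈ range (n+m+1),
          ((-1:ℚ)^(n+k) * (m.choose k)) * (((n+k).choose j : ℚ) * (eulerPoly j).eval (-x)) := by
    intro k hk
    rw [euler_star (n+k) x]
    have h1 : (m.choose k : ℚ) * ((-1)^(n+k) *
        ∑ j ∈ range (n+k+1), ((n+k).choose j : ℚ) * (eulerPoly j).eval (-x))
        = ∑ j ∈ range (n+k+1),
            ((-1:ℚ)^(n+k) * (m.choose k)) * (((n+k).choose j : ℚ) * (eulerPoly j).eval (-x)) := by
      rw [Finset.mul_sum, Finset.mul_sum]
      exact Finset.sum_congr rfl fun j _ => by ring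
    rw [h1]
    apply Finset.sum_subset
    · exact Finset.range_subset_range.2 (by simp only [mem_range] at hk; omega)
    · intro j _ hj
      have : n + k < j := by simp only [mem_range, not_lt] at hj; omega
      rw [Nat.choose_eq_zero_of_lt this]
      push_cast; ring
  rw [Finset.sum_congr rfl key, Finset.sum_comm]
  have inner2 : ∀ j ∈ range (n+m+1),
      ∑ k ∈ range (m+1), ((-1:ℚ)^(n+k) * (m.choose k)) * (((n+k).choose j : ℚ) * (eulerPoly j).eval (-x))
      = ((-1:ℚ)^n * ((-1)^m * (if m ≤ j then ((n.choose (j-m)) : ℚ) else 0))) * (eulerPoly j).eval (-x) := by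
    intro j _
    have h2 : ∑ k ∈ range (m+1), ((-1:ℚ)^(n+k) * (m.choose k)) * (((n+k).choose j : ℚ) * (eulerPoly j).eval (-x))
        = ((-1:ℚ)^n * ∑ k ∈ range (m+1), (-1:ℚ)^k * (m.choose k) * ((n+k).choose j : ℚ)) * (eulerPoly j).eval (-x) := by
      rw [Finset.mul_sum, Finset.sum_mul]
      exact Finset.sum_congr rfl fun k _ => by rw [pow_add]; ring
    rw [h2, chooseSum m n j]
  rw [Finset.sum_congr rfl inner2]
  have drop : ∑ j ∈ range (n+m+1),
      ((-1:ℚ)^n * ((-1)^m * (if m ≤ j then ((n.choose (j-m)) : ℚ) else 0))) * (eulerPoly j).eval (-x)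
      = ((-1:ℚ)^n * (-1)^m) * ∑ k ∈ range (n+1), (n.choose k : ℚ) * (eulerPoly (m+k)).eval (-x) := by
    have hIco : Finset.Ico m (n+m+1) ⊆ range (n+m+1) := by
      intro j hj
      simp only [Finset.mem_Ico] at hj
      exact mem_range.2 hj.2
    calc ∑ j ∈ range (n+m+1),
        ((-1:ℚ)^n * ((-1)^m * (if m ≤ j then ((n.choose (j-m)) : ℚ) else 0))) * (eulerPoly j).eval (-x)
        = ∑ j ∈ Finset.Ico m (n+m+1),
            ((-1:ℚ)^n * ((-1)^m * (if m ≤ j then ((n.choose (j-m)) : ℚ) else 0))) * (eulerPoly j).eval (-x) := by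
          refine (Finset.sum_subset hIco fun j hj hj2 => ?_).symm
          simp only [Finset.mem_Ico, not_and, not_le, mem_range] at hj hj2
          rw [if_neg (show ¬ m ≤ j from by omega)]
          ring
      _ = ∑ j ∈ Finset.Ico m (n+m+1),
            ((-1:ℚ)^n * (-1)^m) * ((n.choose (j-m) : ℚ) * (eulerPoly j).eval (-x)) := by
          refine Finset.sum_congr rfl fun j hj => ?_
          rw [if_pos (Finset.mem_Ico.1 hj).1]
          ring
      _ = ∑ i ∈ range (n+m+1-m),
            ((-1:ℚ)^n * (-1)^m) * ((n.choose (m+i-m) : ℚ) * (eulerPoly (m+i)).eval (-x)) := by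
          rw [Finset.sum_Ico_eq_sum_range]
      _ = ((-1:ℚ)^n * (-1)^m) * ∑ k ∈ range (n+1), (n.choose k : ℚ) * (eulerPoly (m+k)).eval (-x) := by
          rw [show n+m+1-m = n+1 from by omega, Finset.mul_sum]
          exact Finset.sum_congr rfl fun k _ => by rw [Nat.add_sub_cancel_left]
  rw [drop]
  have hmm : (-1:ℚ)^m * (-1)^m = 1 := by
    rw [← pow_add]; exact Even.neg_one_pow ⟨m, rfl⟩
  linear_combination (∑ k ∈ range (n + 1), (n.choose k : ℚ) * (eulerPoly (m+k)).eval (-x)) * ((-1:ℚ)^n) * hmm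
end

section
/- For nonnegative integers k, l and x, y, z with x + y + z = 1, (-1)^k * sum_{j=0}^{k} binomial(k,j) * x^{k-j} * E_{l+j+1}(y)/(l+j+1) + (-1)^l * sum_{j=0}^{l} binomial(l,j) * x^{l-j} * E_{k+j+1}(z)/(k+j+1) = (-x)^{k+l+1} / ((k+l+1) * binomial(k+l,k)). -/
/-!
With `z = 1 - x - y`, let `Φ(y)` be the left-hand side and `W(y)` the same expression with `t ^ n`
in place of `E_n(t)`. Since `E_n(t) + E_n(t + 1) = 2 t ^ n`, we get `Φ(y) + Φ(y + 1) = 2 W(y)`.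
The two halves of `W` are antiderivatives of `± t ^ l (t + x) ^ k`, so `W` is constant, equal to
its value at `y = -x`, which is the Beta integral `(-x) ^ (k + l + 1) B(k + 1, l + 1)`.
Hence the polynomial `f = Φ - W` satisfies `f(y + 1) = -f(y)`; it is periodic, so constant, so zero.
-/

open Finset

open Polynomial
open scoped Nat

namespace Polynomial

variable {R : Type*} [CommRing R] [IsDomain R] [CharZero R]

theorem eq_C_eval_of_periodic {p : R[X]} {c : R} (h : Function.Periodic p.eval c) (hc : c ≠ 0)
    (a : R) : p = C (p.eval a) := by
  refine eq_of_infinite_eval_eq _ _ (Set.infinite_of_injective_forall_mem (f := fun n : ℕ ↦ a + n * c)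
    (fun m n hmn ↦ ?_) fun n ↦ ?_)
  · exact_mod_cast mul_right_cancel₀ hc (add_left_cancel hmn)
  · simpa [add_comm a] using (h.nat_mul n) a

theorem eq_zero_of_antiperiodic {p : R[X]} {c : R} (h : Function.Antiperiodic p.eval c)
    (hc : c ≠ 0) : p = 0 := by
  have hp := eq_C_eval_of_periodic h.periodic_two_mul (mul_ne_zero two_ne_zero hc) 0
  have h0 := h.eq
  rw [hp, eval_C, eval_C, eq_neg_iff_add_eq_zero, add_self_eq_zero] at h0
  rw [hp, h0, C_0]

end Polynomial

section binomSum

variable {K : Type*} [Field K]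

theorem sum_choose_mul_neg_one_pow_div [CharZero K] (k l : ℕ) :
    ∑ j ∈ range (k + 1), (k.choose j : K) * ((-1) ^ j / (l + j + 1)) = k ! * l ! / (k + l + 1)! := by
  induction k generalizing l with
  | zero =>
    have : (l ! : K) ≠ 0 := Nat.cast_ne_zero.mpr l.factorial_ne_zero
    rw [zero_add, sum_range_one, zero_add, Nat.factorial_succ]
    push_cast
    field_simp
    simp
  | succ k ih =>
    have shift (i : ℕ) : (-1 : K) ^ (i + 1) / (l + (i + 1 : ℕ) + 1)
        = -((-1) ^ i / ((l + 1 : ℕ) + i + 1)) := by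
      push_cast
      ring
    -- Pascal's rule turns the sum for `k + 1` into the difference of the sums for `l` and `l + 1`.
    rw [sum_choose_succ_mul (fun i _ ↦ ((-1 : K) ^ i / (l + i + 1))) k]
    simp only [shift, mul_neg, sum_neg_distrib, ih, ← sub_eq_add_neg]
    rw [show k + (l + 1) + 1 = k + l + 1 + 1 by ring, show k + 1 + l + 1 = k + l + 1 + 1 by ring]
    have : ((k + l + 1)! : K) ≠ 0 := Nat.cast_ne_zero.mpr (k + l + 1).factorial_ne_zero
    have : (k + l + 1 + 1 : K) ≠ 0 := by exact_mod_cast (k + l + 1).succ_ne_zero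
    simp only [Nat.factorial_succ (k + l + 1), Nat.factorial_succ k, Nat.factorial_succ l]
    push_cast
    field_simp
    ring

/-- For `f n = t ^ n` this is `∫₀ᵗ s ^ l (s + x) ^ k ds`, expanded binomially. -/
def binomSum (k l : ℕ) (x : K) (f : ℕ → K) : K :=
  ∑ j ∈ range (k + 1), (k.choose j : K) * x ^ (k - j) * f (l + j + 1) / (l + j + 1)

noncomputable def binomSumPoly (k l : ℕ) (x : K) (f : ℕ → K[X]) : K[X] :=
  ∑ j ∈ range (k + 1), C ((k.choose j : K) * x ^ (k - j) / (l + j + 1)) * f (l + j + 1)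

variable (k l : ℕ) (x : K)

theorem eval_binomSumPoly (f : ℕ → K[X]) (t : K) :
    (binomSumPoly k l x f).eval t = binomSum k l x fun n ↦ (f n).eval t := by
  simp only [binomSumPoly, binomSum, eval_finsetSum, eval_mul, eval_C]
  exact sum_congr rfl fun j _ ↦ by ring

theorem binomSum_add (f g : ℕ → K) :
    binomSum k l x f + binomSum k l x g = binomSum k l x fun n ↦ f n + g n := by
  simp only [binomSum, ← sum_add_distrib]
  exact sum_congr rfl fun j _ ↦ by ring

theorem binomSum_const_mul (c : K) (f : ℕ → K) :
    binomSum k l x (fun n ↦ c * f n) = c * binomSum k l x f := by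
  simp only [binomSum, mul_sum]
  exact sum_congr rfl fun j _ ↦ by ring

theorem binomSum_zero_pow : binomSum k l x (0 ^ ·) = 0 := by
  simp [binomSum]

theorem binomSum_neg_pow : binomSum k l x ((-x) ^ ·) =
    (-1) ^ k * (-x) ^ (k + l + 1) * ∑ j ∈ range (k + 1), (k.choose j : K) * ((-1) ^ j / (l + j + 1)) := by
  simp only [binomSum, mul_sum]
  refine sum_congr rfl fun j hj ↦ ?_
  obtain ⟨m, rfl⟩ := Nat.exists_eq_add_of_le (Nat.lt_succ_iff.mp (mem_range.mp hj))
  have hx : x ^ m = (-1) ^ (j + m + j) * (-x) ^ m := by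
    rw [show j + m + j = m + 2 * j by ring, pow_add, pow_mul, neg_one_sq, one_pow, mul_one,
      ← mul_pow, neg_one_mul, neg_neg]
  rw [Nat.add_sub_cancel_left, hx]
  ring

theorem derivative_binomSumPoly_X_pow [CharZero K] :
    derivative (binomSumPoly k l x (X ^ ·)) = X ^ l * (X + C x) ^ k := by
  rw [binomSumPoly, derivative_sum, add_pow, mul_sum]
  refine sum_congr rfl fun j _ ↦ ?_
  have hd : (l + j + 1 : K) ≠ 0 := by exact_mod_cast (l + j).succ_ne_zero
  rw [derivative_C_mul_X_pow, Nat.add_sub_cancel, Nat.cast_add_one, Nat.cast_add,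
    div_mul_cancel₀ _ hd, C_mul, C_pow, C_eq_natCast]
  ring

theorem neg_one_pow_mul_binomSum_neg_pow [CharZero K] :
    (-1) ^ k * binomSum k l x ((-x) ^ ·) = (-x) ^ (k + l + 1) / ((k + l + 1) * (k + l).choose k) := by
  have sq : (-1 : K) ^ k * (-1) ^ k = 1 := by simp [← mul_pow]
  have : ((k + l)! : K) ≠ 0 := Nat.cast_ne_zero.mpr (k + l).factorial_ne_zero
  have : (k ! : K) ≠ 0 := Nat.cast_ne_zero.mpr k.factorial_ne_zero
  have : (l ! : K) ≠ 0 := Nat.cast_ne_zero.mpr l.factorial_ne_zero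
  rw [binomSum_neg_pow, ← mul_assoc, ← mul_assoc, sq, one_mul, sum_choose_mul_neg_one_pow_div,
    Nat.cast_add_choose, Nat.factorial_succ]
  push_cast
  field_simp

theorem binomSum_pow_add_binomSum_neg_sub_pow [CharZero K] (t : K) :
    (-1) ^ k * binomSum k l x (t ^ ·) + (-1) ^ l * binomSum l k x ((-x - t) ^ ·)
      = (-x) ^ (k + l + 1) / ((k + l + 1) * (k + l).choose k) := by
  set W : K[X] := C ((-1) ^ k) * binomSumPoly k l x (X ^ ·)
    + C ((-1) ^ l) * (binomSumPoly l k x (X ^ ·)).comp (-(X + C x))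
  have eval_W (s : K) : W.eval s
      = (-1) ^ k * binomSum k l x (s ^ ·) + (-1) ^ l * binomSum l k x ((-x - s) ^ ·) := by
    simp [W, eval_binomSumPoly, sub_eq_add_neg]
  have hW : derivative W = 0 := by
    have sq : (-1 : K[X]) ^ l * (-1) ^ l = 1 := by simp [← mul_pow]
    have e : -(X + C x) + C x = -X := by ring
    rw [derivative_add, derivative_C_mul, derivative_C_mul, derivative_comp,
      derivative_binomSumPoly_X_pow, derivative_binomSumPoly_X_pow]
    simp only [derivative_add, derivative_C, derivative_X, add_zero, mul_comp, pow_comp, add_comp,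
      X_comp, C_comp, e, neg_pow (X + C x) k, neg_pow (X : K[X]) l, map_pow, map_neg, map_one]
    linear_combination (-(-1) ^ k * X ^ l * (X + C x) ^ k) * sq
  have hconst : W.eval t = W.eval (-x) := by
    rw [eq_C_of_derivative_eq_zero hW, eval_C, eval_C]
  rw [← eval_W, hconst, eval_W, sub_self, binomSum_zero_pow, mul_zero, add_zero,
    neg_one_pow_mul_binomSum_neg_pow]

end binomSum

theorem eval_eulerPoly (n : ℕ) (t : ℚ) :
    (eulerPoly n).eval t = t ^ n - 1 / 2 * ∑ k ∈ range n, (n.choose k : ℚ) * (eulerPoly k).eval t := by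
  rw [eulerPoly]
  simp [eval_finsetSum, Fin.sum_univ_eq_sum_range (fun k ↦ (n.choose k : ℚ) * (eulerPoly k).eval t)]

theorem eval_eulerPoly_add_eval_add_one (n : ℕ) (t : ℚ) :
    (eulerPoly n).eval t + (eulerPoly n).eval (t + 1) = 2 * t ^ n := by
  induction n using Nat.strong_induction_on with
  | _ n ih =>
    have hsum : ∑ k ∈ range n, (n.choose k : ℚ) * (eulerPoly k).eval t
        + ∑ k ∈ range n, (n.choose k : ℚ) * (eulerPoly k).eval (t + 1)
        = 2 * ∑ k ∈ range n, t ^ k * (n.choose k : ℚ) := by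
      rw [← sum_add_distrib, mul_sum]
      refine sum_congr rfl fun k hk ↦ ?_
      rw [← mul_add, ih k (mem_range.mp hk)]
      ring
    have hbinom : (t + 1) ^ n = ∑ k ∈ range n, t ^ k * (n.choose k : ℚ) + t ^ n := by
      simp [add_pow, sum_range_succ]
    rw [eval_eulerPoly n t, eval_eulerPoly n (t + 1)]
    linear_combination hbinom - hsum / 2

theorem binomSum_eval_eulerPoly_add_eval_add_one (k l : ℕ) (x t : ℚ) :
    binomSum k l x (fun n ↦ (eulerPoly n).eval t) + binomSum k l x (fun n ↦ (eulerPoly n).eval (t + 1))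
      = 2 * binomSum k l x (t ^ ·) := by
  simp only [binomSum_add, eval_eulerPoly_add_eval_add_one]
  exact binomSum_const_mul k l x 2 (t ^ ·)

theorem sun_euler_poly_div (k l : ℕ) (x y z : ℚ) (h : x + y + z = 1) :
    (-1 : ℚ) ^ k * ∑ j ∈ range (k + 1),
        (k.choose j : ℚ) * x ^ (k - j) * (eulerPoly (l + j + 1)).eval y / (l + j + 1)
      + (-1 : ℚ) ^ l * ∑ j ∈ range (l + 1),
        (l.choose j : ℚ) * x ^ (l - j) * (eulerPoly (k + j + 1)).eval z / (k + j + 1)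
    = (-x) ^ (k + l + 1) / ((k + l + 1) * ((k + l).choose k : ℚ)) := by
  obtain rfl : z = 1 - x - y := by linear_combination h
  set P : ℚ[X] := C ((-1) ^ k) * binomSumPoly k l x eulerPoly
    + C ((-1) ^ l) * binomSumPoly l k x (fun n ↦ (eulerPoly n).comp (C (1 - x) - X))
  have eval_P (t : ℚ) : P.eval t = (-1) ^ k * binomSum k l x (fun n ↦ (eulerPoly n).eval t)
      + (-1) ^ l * binomSum l k x (fun n ↦ (eulerPoly n).eval (1 - x - t)) := by
    simp [P, eval_binomSumPoly]
  have hP : P = C ((-x) ^ (k + l + 1) / ((k + l + 1) * (k + l).choose k)) := by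
    rw [← sub_eq_zero]
    refine eq_zero_of_antiperiodic (fun t ↦ ?_) one_ne_zero
    have h1 := binomSum_eval_eulerPoly_add_eval_add_one k l x t
    have h2 := binomSum_eval_eulerPoly_add_eval_add_one l k x (-x - t)
    rw [show -x - t + 1 = 1 - x - t by ring] at h2
    simp only [eval_sub, eval_C, eval_P, show 1 - x - (t + 1) = -x - t by ring]
    linear_combination (-1) ^ k * h1 + (-1) ^ l * h2
      + 2 * binomSum_pow_add_binomSum_neg_sub_pow k l x t
  have hy := eval_P y
  rw [hP, eval_C] at hy
  exact hy.symm
end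

section
/- For every nonnegative integer n, sum_{k=0}^{n+3} binomial(n+3,k) * (n+k+3) * (n+k+2) * (n+k+1) * B_{n+k} = 0. -/
open Finset

/-- `SB m n = ∑_{i=0}^m C(m,i) B_{n+i}`. -/
private def SB (m n : ℕ) : ℚ := ∑ i ∈ range (m + 1), (m.choose i : ℚ) * bernoulli (n + i)

private lemma SB_succ (m n : ℕ) : SB (m + 1) n = SB m n + SB m (n + 1) := by
  unfold SB
  rw [Finset.sum_range_succ']
  have h1 : ∀ i ∈ range (m + 1), ((m + 1).choose (i + 1) : ℚ) * bernoulli (n + (i + 1))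
      = (m.choose i : ℚ) * bernoulli ((n + 1) + i)
        + (m.choose (i + 1) : ℚ) * bernoulli (n + (i + 1)) := by
    intro i _
    have : n + (i + 1) = (n + 1) + i := by omega
    rw [this, Nat.choose_succ_succ]
    push_cast
    ring
  rw [Finset.sum_congr rfl h1, Finset.sum_add_distrib]
  have h2 : (∑ i ∈ range (m + 1), (m.choose (i + 1) : ℚ) * bernoulli (n + (i + 1)))
      + ((m + 1).choose 0 : ℚ) * bernoulli (n + 0)
      = ∑ i ∈ range (m + 1), (m.choose i : ℚ) * bernoulli (n + i) := by
    rw [Finset.sum_range_succ, Nat.choose_succ_self]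
    push_cast
    rw [Finset.sum_range_succ']
    simp
  linarith [h2]

private lemma SB_base (n : ℕ) : SB n 0 = (-1 : ℚ) ^ n * bernoulli n := by
  unfold SB
  simp only [Nat.zero_add]
  rw [Finset.sum_range_succ, Nat.choose_self]
  have h := sum_bernoulli n
  rw [h]
  rcases eq_or_ne n 1 with h1 | h1
  · subst h1; norm_num [bernoulli_one]
  · simp only [h1, if_false, zero_add, Nat.cast_one, one_mul]
    rcases Nat.even_or_odd n with he | ho
    · rw [he.neg_one_pow, one_mul]
    · have hz : bernoulli n = 0 := by
        rw [bernoulli_eq_bernoulli'_of_ne_one h1]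
        exact bernoulli'_eq_zero_of_odd ho (by
          rcases ho with ⟨k, hk⟩
          omega)
      simp [hz]

private lemma SB_symm (m : ℕ) : ∀ n, SB m n = (-1 : ℚ) ^ (m + n) * SB n m := by
  induction m with
  | zero =>
    intro n
    have h0 : SB 0 n = bernoulli n := by unfold SB; simp
    rw [h0, SB_base, zero_add]
    rw [← mul_assoc, ← pow_add]
    rw [Even.neg_one_pow ⟨n, by ring⟩, one_mul]
  | succ m ih =>
    intro n
    rw [SB_succ, ih n, ih (n + 1), SB_succ n m]
    have e1 : m + (n + 1) = (m + n) + 1 := by omega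
    have e2 : (m + 1) + n = (m + n) + 1 := by omega
    rw [e1, e2, pow_succ]
    ring

/-- Absorb one factor of `k` into the binomial coefficient. -/
private lemma key (m : ℕ) (g : ℕ → ℚ) :
    ∑ k ∈ range (m + 2), ((m + 1).choose k : ℚ) * k * g k
      = (m + 1) * ∑ i ∈ range (m + 1), (m.choose i : ℚ) * g (i + 1) := by
  rw [Finset.sum_range_succ']
  simp only [Nat.cast_zero, mul_zero, zero_mul, add_zero]
  rw [Finset.mul_sum]
  refine Finset.sum_congr rfl fun i _ => ?_
  have h := Nat.add_one_mul_choose_eq m i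
  have h' : ((m + 1) * m.choose i : ℚ) = ((m + 1).choose (i + 1) : ℚ) * (i + 1) := by
    exact_mod_cast congrArg (Nat.cast : ℕ → ℚ) h
  push_cast at h' ⊢
  linear_combination (-(g (i + 1))) * h'

theorem kaneko_generalization (n : ℕ) :
    ∑ k ∈ range (n + 4), ((n + 3).choose k : ℚ) * (n + k + 3) * (n + k + 2) * (n + k + 1) *
        bernoulli (n + k) = 0 := by
  have h0 : ∑ k ∈ range (n + 4), ((n + 3).choose k : ℚ) * (n + k + 3) * (n + k + 2) * (n + k + 1) *
        bernoulli (n + k)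
      = ((n : ℚ) + 1) * ((n : ℚ) + 2) * ((n : ℚ) + 3) * SB (n + 3) n
        + ∑ k ∈ range (n + 4), ((n + 3).choose k : ℚ) * k *
            ((3 * ((n : ℚ) + 2) * ((n : ℚ) + 3) + 3 * ((n : ℚ) + 3) * ((k : ℚ) - 1)
              + ((k : ℚ) - 1) * ((k : ℚ) - 2)) * bernoulli (n + k)) := by
    have hSB : SB (n + 3) n = ∑ i ∈ range (n + 4), ((n + 3).choose i : ℚ) * bernoulli (n + i) :=
      rfl
    rw [hSB, Finset.mul_sum, ← Finset.sum_add_distrib]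
    refine Finset.sum_congr rfl fun k _ => ?_
    ring
  have h1 : ∑ k ∈ range (n + 4), ((n + 3).choose k : ℚ) * k *
            ((3 * ((n : ℚ) + 2) * ((n : ℚ) + 3) + 3 * ((n : ℚ) + 3) * ((k : ℚ) - 1)
              + ((k : ℚ) - 1) * ((k : ℚ) - 2)) * bernoulli (n + k))
      = ((n : ℚ) + 2 + 1) * ∑ i ∈ range (n + 3), ((n + 2).choose i : ℚ) *
            ((3 * ((n : ℚ) + 2) * ((n : ℚ) + 3) + 3 * ((n : ℚ) + 3) * (((i : ℚ) + 1) - 1)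
              + (((i : ℚ) + 1) - 1) * (((i : ℚ) + 1) - 2)) * bernoulli (n + (i + 1))) := by
    have h := key (n + 2) (fun k =>
      (3 * ((n : ℚ) + 2) * ((n : ℚ) + 3) + 3 * ((n : ℚ) + 3) * ((k : ℚ) - 1)
        + ((k : ℚ) - 1) * ((k : ℚ) - 2)) * bernoulli (n + k))
    push_cast at h
    exact h
  have h2 : ∑ i ∈ range (n + 3), ((n + 2).choose i : ℚ) *
            ((3 * ((n : ℚ) + 2) * ((n : ℚ) + 3) + 3 * ((n : ℚ) + 3) * (((i : ℚ) + 1) - 1)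
              + (((i : ℚ) + 1) - 1) * (((i : ℚ) + 1) - 2)) * bernoulli (n + (i + 1)))
      = 3 * ((n : ℚ) + 2) * ((n : ℚ) + 3) * SB (n + 2) (n + 1)
        + ∑ i ∈ range (n + 3), ((n + 2).choose i : ℚ) * i *
            ((3 * ((n : ℚ) + 3) + ((i : ℚ) - 1)) * bernoulli (n + 1 + i)) := by
    have hSB : SB (n + 2) (n + 1)
        = ∑ i ∈ range (n + 3), ((n + 2).choose i : ℚ) * bernoulli (n + 1 + i) := rfl
    rw [hSB, Finset.mul_sum, ← Finset.sum_add_distrib]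
    refine Finset.sum_congr rfl fun i _ => ?_
    have e : n + (i + 1) = n + 1 + i := by omega
    rw [e]
    ring
  have h3 : ∑ i ∈ range (n + 3), ((n + 2).choose i : ℚ) * i *
            ((3 * ((n : ℚ) + 3) + ((i : ℚ) - 1)) * bernoulli (n + 1 + i))
      = ((n : ℚ) + 1 + 1) * ∑ i ∈ range (n + 2), ((n + 1).choose i : ℚ) *
            ((3 * ((n : ℚ) + 3) + (((i : ℚ) + 1) - 1)) * bernoulli (n + 1 + (i + 1))) := by
    have h := key (n + 1) (fun i =>
      (3 * ((n : ℚ) + 3) + ((i : ℚ) - 1)) * bernoulli (n + 1 + i))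
    push_cast at h
    exact h
  have h4 : ∑ i ∈ range (n + 2), ((n + 1).choose i : ℚ) *
            ((3 * ((n : ℚ) + 3) + (((i : ℚ) + 1) - 1)) * bernoulli (n + 1 + (i + 1)))
      = 3 * ((n : ℚ) + 3) * SB (n + 1) (n + 2)
        + ∑ i ∈ range (n + 2), ((n + 1).choose i : ℚ) * i * bernoulli (n + 2 + i) := by
    have hSB : SB (n + 1) (n + 2)
        = ∑ i ∈ range (n + 2), ((n + 1).choose i : ℚ) * bernoulli (n + 2 + i) := rfl
    rw [hSB, Finset.mul_sum, ← Finset.sum_add_distrib]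
    refine Finset.sum_congr rfl fun i _ => ?_
    have e : n + 1 + (i + 1) = n + 2 + i := by omega
    rw [e]
    ring
  have h5 : ∑ i ∈ range (n + 2), ((n + 1).choose i : ℚ) * i * bernoulli (n + 2 + i)
      = ((n : ℚ) + 1) * ∑ i ∈ range (n + 1), (n.choose i : ℚ) * bernoulli (n + 2 + (i + 1)) := by
    have h := key n (fun i => bernoulli (n + 2 + i))
    push_cast at h
    exact h
  have h6 : ∑ i ∈ range (n + 1), (n.choose i : ℚ) * bernoulli (n + 2 + (i + 1))
      = SB n (n + 3) := by
    have hSB : SB n (n + 3)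
        = ∑ i ∈ range (n + 1), (n.choose i : ℚ) * bernoulli (n + 3 + i) := rfl
    rw [hSB]
    refine Finset.sum_congr rfl fun i _ => ?_
    have e : n + 2 + (i + 1) = n + 3 + i := by omega
    rw [e]
  have hA : SB (n + 3) n = -SB n (n + 3) := by
    rw [SB_symm (n + 3) n]
    rw [Odd.neg_one_pow ⟨n + 1, by ring⟩]
    ring
  have hB : SB (n + 2) (n + 1) = -SB (n + 1) (n + 2) := by
    rw [SB_symm (n + 2) (n + 1)]
    rw [Odd.neg_one_pow ⟨n + 1, by ring⟩]
    ring
  rw [h0, h1, h2, h3, h4, h5, h6, hA, hB]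
  ring
end
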